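/- arXiv:2002.08545 — 3 statements merged into one kernel-verified Lean document; each statement's English description precedes it below -/
import Mathlib

section
/- Let p* ∈ (0,1) and let (A_j, W_j)_{j=1}^n be {0,1}-valued random variables such that (a) Σ_{j=1}^n W_j = m almost surely for a fixed constant m ≤ n, and (b) for every j, conditionally on σ({A_k, W_k}_{k=j+1}^n) and the event {W_j = 1}, A_j is Bernoulli(p*). Define M_t^w = Σ_{j=1}^{n-t} W_j A_j for t = 0, ..., n-1 and, for an integer v ≥ 1, the stopping time τ^w = min{ t ∈ {0,...,n-1} : Σ_{j=1}^{n-t} W_j (1 - A_j) < v or t = n - 1 }. Then M_{τ^w}^w is stochastically dominated by NB(v, p*): ℙ(M_{τ^w}^w ≥ k) ≤ ℙ(N ≥ k) for all integers k ≥ 0, where N ~ NB(v, p*). -/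
/-!
Only the weighted indices matter. List their `A`-values from the top index downwards. The rank of
a weighted index among the weighted ones, counted from the top, is a function of the variables
above it, so hypothesis (b) makes each listed value Bernoulli(p*) given all the values listed
before it: the list of `m` values is i.i.d. Bernoulli(p*). Stopping at `τ^w` keeps a bottom
segment of the weighted indices with fewer than `v` failures, so `M^w_{τ^w} ≥ k` forces the list,
read from the bottom, to show `k` successes before its `v`-th failure. For `m` i.i.d. trials this
has probability at most `ℙ(NB(v, p*) ≥ k)`, because conditioning on the first trial gives the
same recursion `h(k+1, v+1) = p h(k, v+1) + (1 - p) h(k+1, v)` for both quantities.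
-/

open MeasureTheory ProbabilityTheory Set
open Finset

/-- For `v = 0` the truncated `v + i - 1` makes this the point mass at `0`. -/
noncomputable def negBinomialMass (p : ℝ) (v i : ℕ) : ℝ :=
  ((v + i - 1).choose i : ℝ) * p ^ i * (1 - p) ^ v

noncomputable def negBinomialTail (p : ℝ) (v k : ℕ) : ℝ :=
  ∑' i, negBinomialMass p v (k + i)

section NegBinomial

variable {p : ℝ}

theorem negBinomialMass_nonneg (hp0 : 0 ≤ p) (hp1 : p ≤ 1) (v i : ℕ) :
    0 ≤ negBinomialMass p v i := by
  unfold negBinomialMass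
  have : 0 ≤ 1 - p := sub_nonneg.2 hp1
  positivity

theorem hasSum_negBinomialMass (hp0 : 0 ≤ p) (hp1 : p < 1) (v : ℕ) :
    HasSum (negBinomialMass p v) 1 := by
  cases v with
  | zero =>
    convert hasSum_ite_eq 0 (1 : ℝ) with i
    rcases i with _ | i <;> simp [negBinomialMass]
  | succ w =>
    have hr : ‖p‖ < 1 := by rwa [Real.norm_of_nonneg hp0]
    have h := (hasSum_choose_mul_geometric_of_norm_lt_one w hr).mul_right ((1 - p) ^ (w + 1))
    rw [one_div, inv_mul_cancel₀ (pow_ne_zero _ (by linarith))] at h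
    refine (funext fun i => ?_ : negBinomialMass p (w + 1) = _) ▸ h
    rw [negBinomialMass, show w + 1 + i - 1 = i + w by omega, Nat.choose_symm_add]

theorem negBinomialMass_succ_succ (v i : ℕ) :
    negBinomialMass p (v + 1) (i + 1) =
      p * negBinomialMass p (v + 1) i + (1 - p) * negBinomialMass p v (i + 1) := by
  simp only [negBinomialMass, show v + 1 + (i + 1) - 1 = (v + i) + 1 by omega,
    show v + 1 + i - 1 = v + i by omega, show v + (i + 1) - 1 = v + i by omega,
    Nat.choose_succ_succ', Nat.cast_add]
  ring

theorem negBinomialTail_zero (hp0 : 0 ≤ p) (hp1 : p < 1) (v : ℕ) :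
    negBinomialTail p v 0 = 1 := by
  simpa [negBinomialTail] using (hasSum_negBinomialMass hp0 hp1 v).tsum_eq

theorem negBinomialTail_nonneg (hp0 : 0 ≤ p) (hp1 : p ≤ 1) (v k : ℕ) :
    0 ≤ negBinomialTail p v k :=
  tsum_nonneg fun _ => negBinomialMass_nonneg hp0 hp1 _ _

theorem negBinomialTail_succ_succ (hp0 : 0 ≤ p) (hp1 : p < 1) (v k : ℕ) :
    negBinomialTail p (v + 1) (k + 1) =
      p * negBinomialTail p (v + 1) k + (1 - p) * negBinomialTail p v (k + 1) := by
  have hsum (w j : ℕ) : Summable fun i => negBinomialMass p w (j + i) :=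
    (summable_nat_add_iff j).2 (hasSum_negBinomialMass hp0 hp1 w).summable |>.congr
      fun i => by rw [add_comm]
  simp only [negBinomialTail, ← tsum_mul_left]
  rw [← ((hsum _ _).mul_left p).tsum_add ((hsum _ _).mul_left (1 - p))]
  exact tsum_congr fun i => by rw [show k + 1 + i = k + i + 1 by omega, negBinomialMass_succ_succ]

end NegBinomial

section Patterns

variable {m : ℕ}

def bernoulliWeight (p : ℝ) (b : Bool) : ℝ := if b then p else 1 - p

def suffixCount (c : Fin m → Bool) (r : ℕ) (x : Bool) : ℕ :=
  #{l : Fin m | m ≤ l + r ∧ c l = x}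

/-- Read backwards from its last entry, `c` shows `k` successes before its `v`-th failure. -/
def SuccessesPrecedeFailures (k v : ℕ) (c : Fin m → Bool) : Prop :=
  ∃ r, k ≤ suffixCount c r true ∧ suffixCount c r false < v

theorem suffixCount_zero (c : Fin m → Bool) (x : Bool) : suffixCount c 0 x = 0 := by
  simp [suffixCount, Nat.not_le.2 (Fin.is_lt _)]

theorem suffixCount_snoc_succ (c : Fin m → Bool) (y : Bool) (r : ℕ) (x : Bool) :
    suffixCount (Fin.snoc c y : Fin (m + 1) → Bool) (r + 1) x =
      suffixCount c r x + if y = x then 1 else 0 := by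
  have hshift (a : ℕ) : m + 1 ≤ a + (r + 1) ↔ m ≤ a + r := by omega
  simp only [suffixCount, Finset.card_filter, Fin.sum_univ_castSucc, Fin.snoc_castSucc,
    Fin.snoc_last, Fin.val_castSucc, Fin.val_last, hshift]
  simp

theorem successesPrecedeFailures_zero_left {v : ℕ} (hv : 0 < v) (c : Fin m → Bool) :
    SuccessesPrecedeFailures 0 v c :=
  ⟨0, Nat.zero_le _, by simpa [suffixCount_zero] using hv⟩

theorem not_successesPrecedeFailures_zero_right (k : ℕ) (c : Fin m → Bool) :
    ¬ SuccessesPrecedeFailures k 0 c := fun ⟨_, _, h⟩ => Nat.not_lt_zero _ h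

theorem not_successesPrecedeFailures_fin_zero (k v : ℕ) (c : Fin 0 → Bool) :
    ¬ SuccessesPrecedeFailures (k + 1) v c := by
  simp [SuccessesPrecedeFailures, suffixCount]

theorem successesPrecedeFailures_snoc (k v : ℕ) (c : Fin m → Bool) (x : Bool) :
    SuccessesPrecedeFailures (k + 1) (v + 1) (Fin.snoc c x : Fin (m + 1) → Bool) ↔
      cond x (SuccessesPrecedeFailures k (v + 1) c) (SuccessesPrecedeFailures (k + 1) v c) := by
  constructor
  · rintro ⟨_ | r, hs, hf⟩
    · simp [suffixCount_zero] at hs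
    · cases x <;> simp only [suffixCount_snoc_succ] at hs hf <;>
        exact ⟨r, by simpa using hs, by simpa using hf⟩
  · cases x <;> rintro ⟨r, hs, hf⟩ <;>
      exact ⟨r + 1, by simpa [suffixCount_snoc_succ] using hs,
        by simpa [suffixCount_snoc_succ] using hf⟩

open Classical in
noncomputable def probSuccessesPrecedeFailures (p : ℝ) (m k v : ℕ) : ℝ :=
  ∑ c : Fin m → Bool with SuccessesPrecedeFailures k v c, ∏ l, bernoulliWeight p (c l)

variable {p : ℝ}

theorem bernoulliWeight_nonneg (hp0 : 0 ≤ p) (hp1 : p ≤ 1) (x : Bool) :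
    0 ≤ bernoulliWeight p x := by
  cases x <;> simp [bernoulliWeight, hp0, hp1]

theorem sum_prod_bernoulliWeight (p : ℝ) (m : ℕ) :
    ∑ c : Fin m → Bool, ∏ l, bernoulliWeight p (c l) = 1 := by
  rw [← Fintype.sum_pow]
  simp [bernoulliWeight]

theorem probSuccessesPrecedeFailures_le_one (hp0 : 0 ≤ p) (hp1 : p ≤ 1) (m k v : ℕ) :
    probSuccessesPrecedeFailures p m k v ≤ 1 := by
  classical
  exact (sum_prod_bernoulliWeight p m).le.trans' <| Finset.sum_le_sum_of_subset_of_nonneg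
    (Finset.filter_subset _ _) fun _ _ _ =>
      Finset.prod_nonneg fun _ _ => bernoulliWeight_nonneg hp0 hp1 _

theorem probSuccessesPrecedeFailures_succ (p : ℝ) (m k v : ℕ) :
    probSuccessesPrecedeFailures p (m + 1) (k + 1) (v + 1) =
      p * probSuccessesPrecedeFailures p m k (v + 1) +
        (1 - p) * probSuccessesPrecedeFailures p m (k + 1) v := by
  classical
  simp only [probSuccessesPrecedeFailures, Finset.sum_filter, Finset.mul_sum]
  have hsnoc (x : Bool) (c : Fin m → Bool) :
      Fin.snocEquiv (fun _ => Bool) (x, c) = Fin.snoc c x := rfl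
  rw [← (Fin.snocEquiv fun _ : Fin (m + 1) => Bool).sum_comp, Fintype.sum_prod_type,
    Fintype.sum_bool]
  congr 1 <;> refine Finset.sum_congr rfl fun c _ => ?_ <;>
    simp only [hsnoc, successesPrecedeFailures_snoc, cond_true, cond_false,
      Fin.prod_univ_castSucc, Fin.snoc_castSucc, Fin.snoc_last] <;>
    split_ifs <;> simp [bernoulliWeight, mul_comm]

theorem probSuccessesPrecedeFailures_eq_zero {k v : ℕ}
    (h : ∀ c : Fin m → Bool, ¬ SuccessesPrecedeFailures k v c) :
    probSuccessesPrecedeFailures p m k v = 0 := by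
  classical
  simp [probSuccessesPrecedeFailures, h]

theorem probSuccessesPrecedeFailures_le_negBinomialTail (hp0 : 0 ≤ p) (hp1 : p < 1)
    (m k v : ℕ) :
    probSuccessesPrecedeFailures p m k v ≤ negBinomialTail p v k := by
  have hk0 (m v : ℕ) : probSuccessesPrecedeFailures p m 0 v ≤ negBinomialTail p v 0 :=
    (probSuccessesPrecedeFailures_le_one hp0 hp1.le m 0 v).trans_eq
      (negBinomialTail_zero hp0 hp1 v).symm
  have hnonneg := negBinomialTail_nonneg hp0 hp1.le
  induction m generalizing k v with
  | zero =>
    rcases k with _ | k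
    · exact hk0 0 v
    · rw [probSuccessesPrecedeFailures_eq_zero (not_successesPrecedeFailures_fin_zero k v)]
      exact hnonneg v _
  | succ m ih =>
    match k, v with
    | 0, v => exact hk0 _ v
    | k + 1, 0 =>
      rw [probSuccessesPrecedeFailures_eq_zero (not_successesPrecedeFailures_zero_right _)]
      exact hnonneg 0 _
    | k + 1, v + 1 =>
      rw [probSuccessesPrecedeFailures_succ, negBinomialTail_succ_succ hp0 hp1]
      gcongr <;> exact ih _ _

end Patterns

section Rank

variable {α : Type*} [LinearOrder α]

def rankAbove (S : Finset α) (j : α) : ℕ := #{k ∈ S | j < k}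

variable {S : Finset α} {j k : α}

theorem rankAbove_lt_rankAbove (hk : k ∈ S) (hjk : j < k) : rankAbove S k < rankAbove S j := by
  refine Finset.card_lt_card ⟨monotone_filter_right S fun _ _ hx => hjk.trans hx, fun h => ?_⟩
  simpa using h (Finset.mem_filter.2 ⟨hk, hjk⟩)

theorem rankAbove_lt_rankAbove_iff (hj : j ∈ S) (hk : k ∈ S) :
    rankAbove S k < rankAbove S j ↔ j < k := by
  refine ⟨fun h => lt_of_not_ge fun hkj => ?_, rankAbove_lt_rankAbove hk⟩
  rcases hkj.lt_or_eq with hkj | rfl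
  · exact (rankAbove_lt_rankAbove hj hkj).not_gt h
  · exact h.false

theorem rankAbove_injOn : Set.InjOn (rankAbove S) S := fun j hj k hk h => by
  by_contra hne
  rcases lt_or_gt_of_ne hne with hjk | hkj
  · exact (rankAbove_lt_rankAbove hk hjk).ne h.symm
  · exact (rankAbove_lt_rankAbove hj hkj).ne h

theorem rankAbove_lt_card (hj : j ∈ S) : rankAbove S j < #S :=
  Finset.card_lt_card <| Finset.filter_ssubset.2 ⟨j, hj, lt_irrefl j⟩

theorem image_rankAbove : S.image (rankAbove S) = range #S :=
  Finset.eq_of_subset_of_card_le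
    (Finset.image_subset_iff.2 fun _ hj => Finset.mem_range.2 (rankAbove_lt_card hj))
    (by rw [Finset.card_range, Finset.card_image_of_injOn rankAbove_injOn])

theorem mem_iff_card_le_rankAbove_add {P : α → Prop} [DecidablePred P] (hP : Antitone P)
    (hj : j ∈ S) : P j ↔ #S ≤ rankAbove S j + #{k ∈ S | P k} := by
  rw [← Finset.card_filter_add_card_filter_not P, add_comm _ #{k ∈ S | P k},
    Nat.add_le_add_iff_left]
  constructor
  · exact fun hPj => Finset.card_le_card <| monotone_filter_right S fun k _ hk =>
      lt_of_not_ge fun hkj => hk (hP hkj hPj)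
  · refine fun h => by_contra fun hPj => h.not_gt <| Finset.card_lt_card ⟨?_, fun hsub => ?_⟩
    · exact monotone_filter_right S fun k _ hjk hPk => hPj (hP hjk.le hPk)
    · simpa using hsub (Finset.mem_filter.2 ⟨hj, hPj⟩)

theorem card_filter_rankAbove {P : α → Prop} [DecidablePred P] (hP : Antitone P)
    (Q : ℕ → Prop) [DecidablePred Q] :
    #{j ∈ S | P j ∧ Q (rankAbove S j)} =
      #{l ∈ range #S | #S ≤ l + #{k ∈ S | P k} ∧ Q l} := by
  refine Finset.card_nbij (rankAbove S) (fun j hj => ?_) (rankAbove_injOn.mono fun j hj => ?_)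
    fun l hl => ?_
  · obtain ⟨hjS, hPj, hQ⟩ := Finset.mem_filter.1 hj
    exact Finset.mem_filter.2 ⟨Finset.mem_range.2 (rankAbove_lt_card hjS),
      (mem_iff_card_le_rankAbove_add hP hjS).1 hPj, hQ⟩
  · exact (Finset.mem_filter.1 hj).1
  · obtain ⟨hl, hlP, hQ⟩ := Finset.mem_filter.1 hl
    rw [← image_rankAbove] at hl
    obtain ⟨j, hjS, rfl⟩ := Finset.mem_image.1 hl
    exact ⟨j, Finset.mem_filter.2 ⟨hjS, (mem_iff_card_le_rankAbove_add hP hjS).2 hlP, hQ⟩,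
      rfl⟩

theorem exists_rankAbove_eq {i : ℕ} (hi : i < #S) : ∃ j ∈ S, rankAbove S j = i := by
  rw [← Finset.mem_image, image_rankAbove]
  exact Finset.mem_range.2 hi

end Rank

theorem sum_mul_eq_card_filter {ι : Type*} (T : Finset ι) {f g : ι → ℕ}
    (hf : ∀ i, f i = 0 ∨ f i = 1) (hg : ∀ i, g i = 0 ∨ g i = 1) :
    ∑ i ∈ T, f i * g i = #{i ∈ T | f i = 1 ∧ g i = 1} := by
  rw [Finset.card_filter]
  refine Finset.sum_congr rfl fun i _ => ?_
  rcases hf i with h | h <;> rcases hg i with h' | h' <;> simp [h, h']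

theorem card_filter_fin_eq_card_filter_range (m : ℕ) (Q : ℕ → Prop) [DecidablePred Q] :
    #{l : Fin m | Q l} = #{l ∈ range m | Q l} := by
  simp only [Finset.card_filter]
  exact Fin.sum_univ_eq_sum_range (fun l => if Q l then 1 else 0) m

theorem measurableSet_comap_of_countable {Ω β : Type*} [MeasurableSpace β] [Countable β]
    [MeasurableSingletonClass β] {f : Ω → β} {S : Set Ω}
    (hS : ∀ ω ω', f ω = f ω' → ω ∈ S → ω' ∈ S) :
    MeasurableSet[.comap f ‹_›] S :=
  ⟨f '' S, (Set.to_countable _).measurableSet, Set.Subset.antisymm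
    (fun ω ⟨ω', hω', h⟩ => hS ω' ω h hω') (Set.subset_preimage_image f S)⟩

section Weighted

variable {Ω : Type*} {n : ℕ} (A W : Fin n → Ω → ℕ)

def weightedSet (ω : Ω) : Finset (Fin n) := {j | W j ω = 1}

abbrev aboveSigma (j : Fin n) : MeasurableSpace Ω :=
  .comap (fun ω (k : {k : Fin n // j < k}) => (A k.val ω, W k.val ω)) inferInstance

def IsCondBernoulliAbove [MeasurableSpace Ω] (μ : Measure Ω) (p : ℝ) : Prop :=
  ∀ j S, MeasurableSet[aboveSigma A W j] S →
    μ ({ω | A j ω = 1} ∩ {ω | W j ω = 1} ∩ S) =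
      ENNReal.ofReal p * μ ({ω | W j ω = 1} ∩ S)

/-- Entry `l` of `b` prescribes the `A`-value of the weighted index with exactly `l` weighted
indices above it; only the top `i` entries are imposed. -/
def topPatternEvent (i : ℕ) (b : ℕ → Bool) : Set Ω :=
  {ω | ∀ j ∈ weightedSet W ω, rankAbove (weightedSet W ω) j < i →
    A j ω = (b (rankAbove (weightedSet W ω) j)).toNat}

def abovePatternEvent (j : Fin n) (i : ℕ) (b : ℕ → Bool) : Set Ω :=
  {ω | rankAbove (weightedSet W ω) j = i ∧ ∀ k ∈ weightedSet W ω, j < k →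
    A k ω = (b (rankAbove (weightedSet W ω) k)).toNat}

variable {A W}

@[simp]
theorem mem_weightedSet {j : Fin n} {ω : Ω} : j ∈ weightedSet W ω ↔ W j ω = 1 := by
  simp [weightedSet]

theorem aboveSigma_le [MeasurableSpace Ω] (hAm : ∀ j, Measurable (A j))
    (hWm : ∀ j, Measurable (W j)) (j : Fin n) : aboveSigma A W j ≤ ‹MeasurableSpace Ω› :=
  (measurable_pi_lambda _ fun k : {k // j < k} => (hAm k.val).prodMk (hWm k.val)).comap_le

theorem rankAbove_weightedSet_congr {j : Fin n} {ω ω' : Ω}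
    (h : ∀ k, j < k → W k ω = W k ω') :
    rankAbove (weightedSet W ω) j = rankAbove (weightedSet W ω') j := by
  simp only [rankAbove, weightedSet, Finset.filter_filter]
  congr 1
  exact Finset.filter_congr fun k _ => and_congr_left fun hjk => by rw [h k hjk]

theorem measurableSet_abovePatternEvent (j : Fin n) (i : ℕ) (b : ℕ → Bool) :
    MeasurableSet[aboveSigma A W j] (abovePatternEvent A W j i b) := by
  refine measurableSet_comap_of_countable fun ω ω' h => ?_
  have hA k (hk : j < k) : A k ω = A k ω' := congrArg Prod.fst (congrFun h ⟨k, hk⟩)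
  have hW k (hk : j < k) : W k ω = W k ω' := congrArg Prod.snd (congrFun h ⟨k, hk⟩)
  rintro ⟨hrank, hpat⟩
  refine ⟨rankAbove_weightedSet_congr hW ▸ hrank, fun k hk hjk => ?_⟩
  have hk' : k ∈ weightedSet W ω := by simpa [weightedSet, hW k hjk] using hk
  rw [← hA k hjk, hpat k hk' hjk,
    rankAbove_weightedSet_congr fun l hl => hW l (hjk.trans hl)]

theorem mem_topPatternEvent_iff {j : Fin n} {ω : Ω} (hj : j ∈ weightedSet W ω) {i : ℕ}
    (hi : rankAbove (weightedSet W ω) j = i) (b : ℕ → Bool) :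
    ω ∈ topPatternEvent A W i b ↔ ω ∈ abovePatternEvent A W j i b := by
  subst hi
  refine ⟨fun h => ⟨rfl, fun k hk hjk => h k hk (rankAbove_lt_rankAbove hk hjk)⟩,
    fun ⟨_, h⟩ k hk hki => h k hk ((rankAbove_lt_rankAbove_iff hj hk).1 hki)⟩

theorem mem_topPatternEvent_succ_iff {j : Fin n} {ω : Ω} (hj : j ∈ weightedSet W ω) {i : ℕ}
    (hi : rankAbove (weightedSet W ω) j = i) (b : ℕ → Bool) :
    ω ∈ topPatternEvent A W (i + 1) b ↔
      A j ω = (b i).toNat ∧ ω ∈ abovePatternEvent A W j i b := by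
  rw [← mem_topPatternEvent_iff hj hi]
  constructor
  · intro h
    exact ⟨hi ▸ h j hj (by omega), fun k hk hki => h k hk (by omega)⟩
  · rintro ⟨hAj, h⟩ k hk hki
    rcases Nat.lt_succ_iff_lt_or_eq.1 hki with hki | hki
    · exact h k hk hki
    · obtain rfl : k = j := rankAbove_injOn hk hj (hki.trans hi.symm)
      rw [hki, hAj]

theorem IsCondBernoulliAbove.measure_inter [MeasurableSpace Ω] {μ : Measure Ω}
    [IsFiniteMeasure μ] {p : ℝ} (h : IsCondBernoulliAbove A W μ p) (hp0 : 0 ≤ p)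
    (hp1 : p ≤ 1) (hAm : ∀ j, Measurable (A j)) (hA01 : ∀ j ω, A j ω = 0 ∨ A j ω = 1) {j : Fin n}
    {S : Set Ω} (hS : MeasurableSet[aboveSigma A W j] S) (x : Bool) :
    μ ({ω | A j ω = x.toNat} ∩ ({ω | W j ω = 1} ∩ S)) =
      ENNReal.ofReal (bernoulliWeight p x) * μ ({ω | W j ω = 1} ∩ S) := by
  have hone := h j S hS
  rw [Set.inter_assoc] at hone
  cases x
  · set X := {ω | W j ω = 1} ∩ S
    have hzero : {ω | A j ω = (false).toNat} ∩ X = X \ {ω | A j ω = 1} := by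
      ext ω
      rcases hA01 j ω with hA | hA <;> simp [hA, and_comm]
    have hsplit := measure_inter_add_sdiff (μ := μ) X
      (show MeasurableSet {ω | A j ω = 1} from hAm j (measurableSet_singleton 1))
    have hweights : ENNReal.ofReal p * μ X + ENNReal.ofReal (1 - p) * μ X = μ X := by
      rw [← add_mul, ← ENNReal.ofReal_add hp0 (by linarith), add_sub_cancel, ENNReal.ofReal_one,
        one_mul]
    rw [Set.inter_comm X, hone] at hsplit
    rw [hzero, bernoulliWeight, if_neg Bool.false_ne_true]
    exact (ENNReal.add_right_inj
      (ENNReal.mul_ne_top ENNReal.ofReal_ne_top (measure_ne_top μ X))).1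
        (hsplit.trans hweights.symm)
  · simpa [bernoulliWeight] using hone

theorem mem_topPatternEvent_iff_mem_iUnion {ω : Ω} {i : ℕ} (hi : i < #(weightedSet W ω))
    (b : ℕ → Bool) :
    ω ∈ topPatternEvent A W i b ↔
      ω ∈ ⋃ j, {ω | W j ω = 1} ∩ abovePatternEvent A W j i b := by
  simp only [Set.mem_iUnion, Set.mem_inter_iff, Set.mem_ofPred_eq]
  constructor
  · intro h
    obtain ⟨j, hj, hrank⟩ := exists_rankAbove_eq hi
    exact ⟨j, mem_weightedSet.1 hj, (mem_topPatternEvent_iff hj hrank b).1 h⟩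
  · rintro ⟨j, hj, hab⟩
    exact (mem_topPatternEvent_iff (mem_weightedSet.2 hj) hab.1 b).2 hab

theorem mem_topPatternEvent_succ_iff_mem_iUnion {ω : Ω} {i : ℕ} (hi : i < #(weightedSet W ω))
    (b : ℕ → Bool) :
    ω ∈ topPatternEvent A W (i + 1) b ↔
      ω ∈ ⋃ j, {ω | A j ω = (b i).toNat} ∩
        ({ω | W j ω = 1} ∩ abovePatternEvent A W j i b) := by
  simp only [Set.mem_iUnion, Set.mem_inter_iff, Set.mem_ofPred_eq]
  constructor
  · intro h
    obtain ⟨j, hj, hrank⟩ := exists_rankAbove_eq hi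
    obtain ⟨hA, hab⟩ := (mem_topPatternEvent_succ_iff hj hrank b).1 h
    exact ⟨j, hA, mem_weightedSet.1 hj, hab⟩
  · rintro ⟨j, hA, hj, hab⟩
    exact (mem_topPatternEvent_succ_iff (mem_weightedSet.2 hj) hab.1 b).2 ⟨hA, hab⟩

theorem pairwise_disjoint_abovePatternEvent (i : ℕ) (b : ℕ → Bool) :
    Pairwise (Function.onFun Disjoint fun j => {ω | W j ω = 1} ∩ abovePatternEvent A W j i b) :=
  fun _ _ hne => Set.disjoint_left.2 fun _ ⟨hW, hr, _⟩ ⟨hW', hr', _⟩ =>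
    hne (rankAbove_injOn (mem_weightedSet.2 hW) (mem_weightedSet.2 hW') (hr.trans hr'.symm))

theorem measure_topPatternEvent [MeasurableSpace Ω] {μ : Measure Ω} [IsProbabilityMeasure μ]
    {p : ℝ} (hcond : IsCondBernoulliAbove A W μ p) (hp0 : 0 ≤ p) (hp1 : p ≤ 1)
    (hAm : ∀ j, Measurable (A j)) (hWm : ∀ j, Measurable (W j))
    (hA01 : ∀ j ω, A j ω = 0 ∨ A j ω = 1) {m : ℕ}
    (hcard : ∀ᵐ ω ∂μ, #(weightedSet W ω) = m) {i : ℕ} (hi : i ≤ m) (b : ℕ → Bool) :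
    μ (topPatternEvent A W i b) = ∏ l ∈ range i, ENNReal.ofReal (bernoulliWeight p (b l)) := by
  induction i with
  | zero => simp [topPatternEvent]
  | succ i ih =>
    -- Whether a weighted `j` has rank `i`, and whether the pattern holds above it, is read off the
    -- variables above `j`, so conditioning on them contributes the factor for `A j`.
    have hlt : ∀ᵐ ω ∂μ, i < #(weightedSet W ω) := hcard.mono fun ω h => h ▸ hi
    set X := fun j => {ω | W j ω = 1} ∩ abovePatternEvent A W j i b
    have hXm (j : Fin n) : MeasurableSet (X j) := (hWm j (measurableSet_singleton 1)).inter
      (aboveSigma_le hAm hWm j _ (measurableSet_abovePatternEvent j i b))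
    have hdisj := pairwise_disjoint_abovePatternEvent (A := A) (W := W) i b
    calc μ (topPatternEvent A W (i + 1) b)
        = μ (⋃ j, {ω | A j ω = (b i).toNat} ∩ X j) :=
          measure_congr <| Filter.eventuallyEq_set.2 <|
            hlt.mono fun ω h => mem_topPatternEvent_succ_iff_mem_iUnion h b
      _ = ∑ j, μ ({ω | A j ω = (b i).toNat} ∩ X j) := by
          have hAX (j : Fin n) : MeasurableSet ({ω | A j ω = (b i).toNat} ∩ X j) :=
            (hAm j (measurableSet_singleton _)).inter (hXm j)
          rw [measure_iUnion (hdisj.mono fun _ _ h =>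
            h.mono Set.inter_subset_right Set.inter_subset_right) hAX, tsum_fintype]
      _ = ∑ j, ENNReal.ofReal (bernoulliWeight p (b i)) * μ (X j) :=
          Finset.sum_congr rfl fun j _ =>
            hcond.measure_inter hp0 hp1 hAm hA01 (measurableSet_abovePatternEvent j i b) (b i)
      _ = ENNReal.ofReal (bernoulliWeight p (b i)) * μ (topPatternEvent A W i b) := by
          rw [← Finset.mul_sum, measure_congr (Filter.eventuallyEq_set.2
            (hlt.mono fun ω h => mem_topPatternEvent_iff_mem_iUnion h b)),
            measure_iUnion hdisj hXm, tsum_fintype]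
      _ = ∏ l ∈ range (i + 1), ENNReal.ofReal (bernoulliWeight p (b l)) := by
          rw [ih (Nat.le_of_succ_le hi), Finset.prod_range_succ, mul_comm]

variable (A W) in
def patternEvent {m : ℕ} (c : Fin m → Bool) : Set Ω :=
  topPatternEvent A W m (Function.extend Fin.val c fun _ => false)

theorem measure_patternEvent [MeasurableSpace Ω] {μ : Measure Ω} [IsProbabilityMeasure μ]
    {p : ℝ} (hcond : IsCondBernoulliAbove A W μ p) (hp0 : 0 ≤ p) (hp1 : p ≤ 1)
    (hAm : ∀ j, Measurable (A j)) (hWm : ∀ j, Measurable (W j))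
    (hA01 : ∀ j ω, A j ω = 0 ∨ A j ω = 1) {m : ℕ}
    (hcard : ∀ᵐ ω ∂μ, #(weightedSet W ω) = m) (c : Fin m → Bool) :
    μ (patternEvent A W c) = ENNReal.ofReal (∏ l, bernoulliWeight p (c l)) := by
  rw [patternEvent, measure_topPatternEvent hcond hp0 hp1 hAm hWm hA01 hcard le_rfl,
    ENNReal.ofReal_prod_of_nonneg fun l _ => bernoulliWeight_nonneg hp0 hp1 _,
    ← Fin.prod_univ_eq_prod_range]
  simp only [Fin.val_injective.extend_apply]

end Weighted

section Observed

variable {Ω : Type*} {n : ℕ} {A W : Fin n → Ω → ℕ}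

variable (A W) in
def observedPattern (ω : Ω) (l : ℕ) : Bool :=
  decide (∃ j ∈ weightedSet W ω, rankAbove (weightedSet W ω) j = l ∧ A j ω = 1)

theorem observedPattern_rankAbove {ω : Ω} {j : Fin n} (hj : j ∈ weightedSet W ω) :
    observedPattern A W ω (rankAbove (weightedSet W ω) j) = decide (A j ω = 1) :=
  decide_eq_decide.2 ⟨fun ⟨_, hj', hr, hA⟩ => rankAbove_injOn hj' hj hr ▸ hA,
    fun hA => ⟨j, hj, rfl, hA⟩⟩

theorem mem_patternEvent_observedPattern (hA01 : ∀ j ω, A j ω = 0 ∨ A j ω = 1) (ω : Ω)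
    (m : ℕ) : ω ∈ patternEvent A W (fun l : Fin m => observedPattern A W ω l) := by
  intro j hj hjm
  rw [show rankAbove (weightedSet W ω) j = (⟨_, hjm⟩ : Fin m).val from rfl,
    Fin.val_injective.extend_apply, observedPattern_rankAbove hj]
  rcases hA01 j ω with h | h <;> simp [h]

theorem sum_mul_eq_suffixCount_observedPattern (hA01 : ∀ j ω, A j ω = 0 ∨ A j ω = 1)
    (hW01 : ∀ j ω, W j ω = 0 ∨ W j ω = 1) {ω : Ω} {m : ℕ} (hω : #(weightedSet W ω) = m)
    (s : ℕ) (x : Bool) :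
    ∑ j ∈ univ.filter (fun j : Fin n => j.val < s), W j ω * cond x (A j ω) (1 - A j ω) =
      suffixCount (fun l : Fin m => observedPattern A W ω l)
        #{j ∈ weightedSet W ω | j.val < s} x := by
  have hP : Antitone fun j : Fin n => j.val < s := fun _ _ hjk hk => lt_of_le_of_lt hjk hk
  rw [sum_mul_eq_card_filter _ (hW01 · ω) fun j => by
      cases x <;> have := hA01 j ω <;> simp <;> omega,
    suffixCount, card_filter_fin_eq_card_filter_range m
      (fun l => m ≤ l + _ ∧ observedPattern A W ω l = x),
    ← hω, ← card_filter_rankAbove hP, Finset.filter_filter]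
  congr 1
  ext j
  simp only [Finset.mem_filter, Finset.mem_univ, true_and]
  by_cases hj : j ∈ weightedSet W ω
  · rw [observedPattern_rankAbove hj]
    rw [mem_weightedSet] at hj
    rcases hA01 j ω with h | h <;> cases x <;> simp [h, hj]
  · simp_all

theorem card_weightedSet (hW01 : ∀ j ω, W j ω = 0 ∨ W j ω = 1) (ω : Ω) :
    #(weightedSet W ω) = ∑ j, W j ω := by
  rw [weightedSet, Finset.card_filter]
  refine Finset.sum_congr rfl fun j _ => ?_
  rcases hW01 j ω with h | h <;> simp [h]

/-- For `t = n - 1` only the index `0` is kept, so successes and failures cannot both be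
positive. -/
theorem failures_lt_or_successes_eq_zero (hA01 : ∀ j ω, A j ω = 0 ∨ A j ω = 1)
    (hW01 : ∀ j ω, W j ω = 0 ∨ W j ω = 1) {ω : Ω} {v t : ℕ} (hv : 1 ≤ v)
    (ht : ∑ j ∈ univ.filter (fun j : Fin n => j.val < n - t), W j ω * (1 - A j ω) < v ∨
      t = n - 1) :
    ∑ j ∈ univ.filter (fun j : Fin n => j.val < n - t), W j ω * (1 - A j ω) < v ∨
      ∑ j ∈ univ.filter (fun j : Fin n => j.val < n - t), W j ω * A j ω = 0 := by
  rcases ht with h | rfl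
  · exact Or.inl h
  have hle : ∑ j ∈ univ.filter (fun j : Fin n => j.val < n - (n - 1)),
      (W j ω * A j ω + W j ω * (1 - A j ω)) ≤ 1 :=
    calc _ ≤ ∑ j ∈ univ.filter (fun j : Fin n => j.val < n - (n - 1)), 1 :=
          Finset.sum_le_sum fun j _ => by
            rcases hA01 j ω with h | h <;> rcases hW01 j ω with h' | h' <;> simp [h, h']
      _ ≤ 1 := by rw [Finset.sum_const, smul_eq_mul, mul_one, Fin.card_filter_val_lt]; omega
  rw [Finset.sum_add_distrib] at hle
  omega

theorem successesPrecedeFailures_observedPattern (hA01 : ∀ j ω, A j ω = 0 ∨ A j ω = 1)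
    (hW01 : ∀ j ω, W j ω = 0 ∨ W j ω = 1) {ω : Ω} {m : ℕ} (hω : #(weightedSet W ω) = m)
    {k v t : ℕ} (hv : 1 ≤ v)
    (ht : ∑ j ∈ univ.filter (fun j : Fin n => j.val < n - t), W j ω * (1 - A j ω) < v ∨
      t = n - 1)
    (hk : k ≤ ∑ j ∈ univ.filter (fun j : Fin n => j.val < n - t), W j ω * A j ω) :
    SuccessesPrecedeFailures k v fun l : Fin m => observedPattern A W ω l := by
  rcases failures_lt_or_successes_eq_zero hA01 hW01 hv ht with hF | hM0
  · exact ⟨_, (sum_mul_eq_suffixCount_observedPattern hA01 hW01 hω _ true).symm ▸ hk,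
      (sum_mul_eq_suffixCount_observedPattern hA01 hW01 hω _ false).symm ▸ hF⟩
  · obtain rfl : k = 0 := by omega
    exact successesPrecedeFailures_zero_left hv _

end Observed

theorem weighted_stopped_sum_negBinomial_dominated_general
    {Ω : Type*} [MeasurableSpace Ω] (μ : Measure Ω) [IsProbabilityMeasure μ]
    (n v m : ℕ) (hv : 1 ≤ v)
    (pstar : ℝ) (hp : pstar ∈ Set.Ioo (0:ℝ) 1)
    (A W : Fin n → Ω → ℕ) (hAm : ∀ j, Measurable (A j)) (hWm : ∀ j, Measurable (W j))
    (hA01 : ∀ j ω, A j ω = 0 ∨ A j ω = 1)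
    (hW01 : ∀ j ω, W j ω = 0 ∨ W j ω = 1)
    (hWsum : ∀ᵐ ω ∂μ, ∑ j, W j ω = m)
    (hcond : ∀ j : Fin n, ∀ S : Set Ω,
      MeasurableSet[MeasurableSpace.comap
        (fun ω (k : {k : Fin n // j < k}) => (A k.val ω, W k.val ω)) inferInstance] S →
      μ ({ω | A j ω = 1} ∩ {ω | W j ω = 1} ∩ S)
        = ENNReal.ofReal pstar * μ ({ω | W j ω = 1} ∩ S))
    (M : ℕ → Ω → ℕ)
    (hM : ∀ t ω, M t ω =
      ∑ j ∈ Finset.univ.filter (fun j : Fin n => j.val < n - t), W j ω * A j ω)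
    (τ : Ω → ℕ)
    (hτ : ∀ ω, τ ω = sInf {t : ℕ | t ≤ n - 1 ∧
      ((∑ j ∈ Finset.univ.filter (fun j : Fin n => j.val < n - t),
          W j ω * (1 - A j ω)) < v ∨ t = n - 1)}) :
    ∀ k : ℕ, μ {ω | k ≤ M (τ ω) ω}
      ≤ ENNReal.ofReal (∑' i : ℕ,
          ((v + (k + i) - 1).choose (k + i) : ℝ) * pstar ^ (k + i) * (1 - pstar) ^ v) := by
  classical
  intro k
  obtain ⟨hp0, hp1⟩ := hp
  have hcard : ∀ᵐ ω ∂μ, #(weightedSet W ω) = m :=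
    hWsum.mono fun ω h => (card_weightedSet hW01 ω).trans h
  set bad : Finset (Fin m → Bool) := univ.filter (SuccessesPrecedeFailures k v)
  have hcover : {ω | k ≤ M (τ ω) ω} ≤ᵐ[μ] ⋃ c ∈ bad, patternEvent A W c := by
    filter_upwards [hcard] with ω hω hk
    obtain ⟨-, hτω⟩ : τ ω ∈ _ := by
      rw [hτ ω]
      exact Nat.sInf_mem ⟨n - 1, le_rfl, Or.inr rfl⟩
    refine Set.mem_biUnion (Finset.mem_filter.2 ⟨Finset.mem_univ _, ?_⟩)
      (mem_patternEvent_observedPattern hA01 ω m)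
    exact successesPrecedeFailures_observedPattern hA01 hW01 hω hv hτω (hM (τ ω) ω ▸ hk)
  calc μ {ω | k ≤ M (τ ω) ω}
      ≤ μ (⋃ c ∈ bad, patternEvent A W c) := measure_mono_ae hcover
    _ ≤ ∑ c ∈ bad, μ (patternEvent A W c) := measure_biUnion_finset_le _ _
    _ = ENNReal.ofReal (probSuccessesPrecedeFailures pstar m k v) := by
      rw [probSuccessesPrecedeFailures, ENNReal.ofReal_sum_of_nonneg fun c _ =>
        Finset.prod_nonneg fun l _ => bernoulliWeight_nonneg hp0.le hp1.le _]
      exact Finset.sum_congr rfl fun c _ =>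
        measure_patternEvent hcond hp0.le hp1.le hAm hWm hA01 hcard c
    _ ≤ ENNReal.ofReal (negBinomialTail pstar v k) :=
      ENNReal.ofReal_le_ofReal
        (probSuccessesPrecedeFailures_le_negBinomialTail hp0.le hp1 m k v)

/-- Weighted version. Let `(A_j, W_j)` be binary with `Σ_j W_j = m` a.s.,
and for each `j`, conditionally on `σ({A_k, W_k}_{k>j})` and `{W_j = 1}`, let `A_j`
be Bernoulli(p*). With `M^w_t = Σ_{j=1}^{n-t} W_j A_j` and the stopping time
`τ^w = min{t : Σ_{j=1}^{n-t} W_j(1-A_j) < v or t = n-1}`, the stopped sum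
`M^w_{τ^w}` is stochastically dominated by `NB(v, p*)`. -/
theorem weighted_stopped_sum_negBinomial_dominated
    {Ω : Type*} [MeasurableSpace Ω] (μ : Measure Ω) [IsProbabilityMeasure μ]
    (n v m : ℕ) (hn : 1 ≤ n) (hv : 1 ≤ v) (hm : m ≤ n)
    (pstar : ℝ) (hp : pstar ∈ Set.Ioo (0:ℝ) 1)
    (A W : Fin n → Ω → ℕ) (hAm : ∀ j, Measurable (A j)) (hWm : ∀ j, Measurable (W j))
    (hA01 : ∀ j ω, A j ω = 0 ∨ A j ω = 1)
    (hW01 : ∀ j ω, W j ω = 0 ∨ W j ω = 1)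
    (hWsum : ∀ᵐ ω ∂μ, ∑ j, W j ω = m)
    (hcond : ∀ j : Fin n, ∀ S : Set Ω,
      MeasurableSet[MeasurableSpace.comap
        (fun ω (k : {k : Fin n // j < k}) => (A k.val ω, W k.val ω)) inferInstance] S →
      μ ({ω | A j ω = 1} ∩ {ω | W j ω = 1} ∩ S)
        = ENNReal.ofReal pstar * μ ({ω | W j ω = 1} ∩ S))
    (M : ℕ → Ω → ℕ)
    (hM : ∀ t ω, M t ω =
      ∑ j ∈ Finset.univ.filter (fun j : Fin n => j.val < n - t), W j ω * A j ω)
    (τ : Ω → ℕ)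
    (hτ : ∀ ω, τ ω = sInf {t : ℕ | t ≤ n - 1 ∧
      ((∑ j ∈ Finset.univ.filter (fun j : Fin n => j.val < n - t),
          W j ω * (1 - A j ω)) < v ∨ t = n - 1)}) :
    ∀ k : ℕ, μ {ω | k ≤ M (τ ω) ω}
      ≤ ENNReal.ofReal (∑' i : ℕ,
          ((v + (k + i) - 1).choose (k + i) : ℝ) * pstar ^ (k + i) * (1 - pstar) ^ v) :=
  weighted_stopped_sum_negBinomial_dominated_general μ n v m hv pstar hp A W hAm hWm hA01 hW01 hWsum
    hcond M hM τ hτ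
end

section
/- Let p* ∈ (0,1) and let (A_j, W_j)_{j=1}^n be {0,1}-valued random variables such that Σ_{j=1}^n W_j = m almost surely for a fixed m ≤ n, and for every j, conditionally on σ({A_k, W_k}_{k=j+1}^n) and the event {W_j = 1}, A_j is Bernoulli(p*). Then the weighted sum Σ_{j=1}^n W_j A_j has the same distribution as Σ_{l=1}^m B_l, where B_1, ..., B_m are i.i.d. Bernoulli(p*); in particular Σ_{j=1}^n W_j A_j follows a Binomial(m, p*) distribution. -/
/-!
Reveal the trials from the last index down. Let `F_j = σ((A_k, W_k) : k ≥ j)` and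
`N_j = m - ∑_{k ≥ j} W_k`, the number of weighted trials with index below `j`. Then `N_j` is
`F_j`-measurable and, because `∑ W = m` almost surely, `N_{j+1} = N_j + W_j` almost surely.
By induction on `j`, conditionally on `F_j` the partial sum `∑_{k < j} W_k A_k` is
Binomial(`N_j`, `p*`): passing from `j` to `j + 1` adds the term `W_j A_j`, which is
Bernoulli(`p*`) given `F_{j+1}` and `W_j = 1`, and Pascal's rule recombines the two outcomes.
At `j = n` there is no future left and `N_n = m`.
-/

open MeasureTheory Set

open scoped ENNReal

noncomputable def binomialMass (p : ℝ) (s x : ℕ) : ℝ≥0∞ :=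
  ENNReal.ofReal ((s.choose x : ℝ) * p ^ x * (1 - p) ^ (s - x))

section binomialMass

variable {p : ℝ}

theorem binomialMass_zero_left (p : ℝ) (x : ℕ) :
    binomialMass p 0 x = if x = 0 then 1 else 0 := by
  rcases Nat.eq_zero_or_pos x with rfl | hx
  · simp [binomialMass]
  · simp [binomialMass, Nat.choose_eq_zero_of_lt hx, hx.ne']

theorem binomialMass_succ_zero (hp1 : p ≤ 1) (s : ℕ) :
    binomialMass p (s + 1) 0 = ENNReal.ofReal (1 - p) * binomialMass p s 0 := by
  rw [binomialMass, binomialMass, ← ENNReal.ofReal_mul (by linarith)]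
  simp [pow_succ, mul_comm]

theorem binomialMass_succ_succ (hp0 : 0 ≤ p) (hp1 : p ≤ 1) (s x : ℕ) :
    binomialMass p (s + 1) (x + 1) =
      ENNReal.ofReal (1 - p) * binomialMass p s (x + 1) + ENNReal.ofReal p * binomialMass p s x := by
  have hq : 0 ≤ 1 - p := by linarith
  simp only [binomialMass]
  rw [← ENNReal.ofReal_mul hq, ← ENNReal.ofReal_mul hp0, ← ENNReal.ofReal_add (by positivity)
    (by positivity), Nat.choose_succ_succ, Nat.add_sub_add_right]
  congr 1
  rcases lt_or_ge x s with hxs | hsx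
  · obtain ⟨t, rfl⟩ := Nat.exists_eq_add_of_lt hxs
    rw [show x + t + 1 - x = t + 1 by omega, show x + t + 1 - (x + 1) = t by omega]
    push_cast
    ring
  · rw [Nat.choose_eq_zero_of_lt (by omega : s < x + 1), Nat.sub_eq_zero_of_le hsx]
    push_cast
    ring

theorem tsum_binomialMass_succ_zero_mul (hp1 : p ≤ 1) (G : ℕ → ℝ≥0∞) :
    ∑' s, binomialMass p (s + 1) 0 * G s =
      ∑' s, binomialMass p s 0 * (ENNReal.ofReal (1 - p) * G s) :=
  tsum_congr fun s => by rw [binomialMass_succ_zero hp1]; ring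

theorem tsum_binomialMass_succ_succ_mul (hp0 : 0 ≤ p) (hp1 : p ≤ 1) (G : ℕ → ℝ≥0∞) (x : ℕ) :
    ∑' s, binomialMass p (s + 1) (x + 1) * G s =
      ∑' s, binomialMass p s (x + 1) * (ENNReal.ofReal (1 - p) * G s) +
        ∑' s, binomialMass p s x * (ENNReal.ofReal p * G s) := by
  rw [← ENNReal.tsum_add]
  exact tsum_congr fun s => by rw [binomialMass_succ_succ hp0 hp1]; ring

end binomialMass

section

variable {Ω : Type*} {mΩ : MeasurableSpace Ω} {μ : Measure Ω}

theorem measure_eq_inter_zero_add_inter_one {f : Ω → ℕ} (hf : Measurable f)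
    (hf01 : ∀ ω, f ω = 0 ∨ f ω = 1) (T : Set Ω) :
    μ T = μ ({ω | f ω = 0} ∩ T) + μ ({ω | f ω = 1} ∩ T) := by
  rw [← measure_inter_add_sdiff T (hf (measurableSet_singleton 1)), add_comm, inter_comm T]
  congr 2
  ext ω
  rcases hf01 ω with h | h <;> simp [h]

theorem measure_inter_zero_eq_of_bernoulli [IsFiniteMeasure μ] {f : Ω → ℕ} (hf : Measurable f)
    (hf01 : ∀ ω, f ω = 0 ∨ f ω = 1) {p : ℝ} (hp0 : 0 ≤ p) (hp1 : p ≤ 1) {E : Set Ω}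
    (h : μ ({ω | f ω = 1} ∩ E) = ENNReal.ofReal p * μ E) :
    μ ({ω | f ω = 0} ∩ E) = ENNReal.ofReal (1 - p) * μ E := by
  have hsplit := measure_eq_inter_zero_add_inter_one (μ := μ) hf hf01 E
  have hone : ENNReal.ofReal (1 - p) * μ E + ENNReal.ofReal p * μ E = μ E := by
    rw [← add_mul, ← ENNReal.ofReal_add (by linarith) hp0]
    simp
  rw [h] at hsplit
  exact (ENNReal.add_left_inj (by finiteness)).mp (hsplit.symm.trans hone.symm)

/-- Conditionally on `F`, `X` is binomial with `N` trials of success probability `p`. -/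
def IsCondBinomial (μ : Measure Ω) (F : MeasurableSpace Ω) (X N : Ω → ℕ) (p : ℝ) : Prop :=
  ∀ S, MeasurableSet[F] S → ∀ x,
    μ (S ∩ {ω | X ω = x}) = ∑' s, binomialMass p s x * μ (S ∩ {ω | N ω = s})

theorem isCondBinomial_zero {F : MeasurableSpace Ω} {N : Ω → ℕ} (hN : ∀ᵐ ω ∂μ, N ω = 0)
    (p : ℝ) : IsCondBinomial μ F (fun _ => 0) N p := by
  intro S _ x
  have hS : ∀ s, μ (S ∩ {ω | N ω = s}) = if s = 0 then μ S else 0 := by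
    rintro (_ | s)
    · exact measure_inter_conull hN
    · refine measure_mono_null (fun ω hω => ?_) (ae_iff.mp hN)
      simp [hω.2.out]
  simp_rw [hS, mul_ite, mul_zero, tsum_ite_eq, binomialMass_zero_left]
  rcases eq_or_ne x 0 with rfl | hx
  · simp
  · simp [hx, Ne.symm hx]

theorem measure_inter_add_mul_eq {X w a : Ω → ℕ} (hw : Measurable w) (ha : Measurable a)
    (hw01 : ∀ ω, w ω = 0 ∨ w ω = 1) (ha01 : ∀ ω, a ω = 0 ∨ a ω = 1) (S : Set Ω) (x : ℕ) :
    μ (S ∩ {ω | X ω + w ω * a ω = x}) =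
      μ ({ω | w ω = 0} ∩ S ∩ {ω | X ω = x}) +
        (μ ({ω | a ω = 0} ∩ {ω | w ω = 1} ∩ S ∩ {ω | X ω = x}) +
          μ ({ω | a ω = 1} ∩ {ω | w ω = 1} ∩ S ∩ {ω | X ω + 1 = x})) := by
  rw [measure_eq_inter_zero_add_inter_one hw hw01,
    measure_eq_inter_zero_add_inter_one ha ha01 ({ω | w ω = 1} ∩ _)]
  refine congr_arg₂ (· + ·) (congr_arg μ ?_) (congr_arg₂ (· + ·) (congr_arg μ ?_) (congr_arg μ ?_))
    <;> ext ω <;> simp only [mem_inter_iff, mem_ofPred_eq] <;> grind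

theorem measure_inter_eq_of_ae_add {N N' w : Ω → ℕ} (hN : ∀ᵐ ω ∂μ, N ω + w ω = N' ω) {b : ℕ}
    {R : Set Ω} (hR : R ⊆ {ω | w ω = b}) (s : ℕ) :
    μ (R ∩ {ω | N ω = s}) = μ (R ∩ {ω | N' ω = s + b}) := by
  refine measure_congr (Filter.eventuallyEq_set.mpr ?_)
  filter_upwards [hN] with ω hω
  have := @hR ω
  simp only [mem_inter_iff, mem_ofPred_eq] at this ⊢
  grind

theorem IsCondBinomial.add_mul [IsFiniteMeasure μ] {F F' : MeasurableSpace Ω}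
    {X N N' w a : Ω → ℕ} {p : ℝ} (hX : IsCondBinomial μ F X N p) (hF : F ≤ mΩ) (hF' : F' ≤ F)
    (hw : Measurable[F] w) (ha : Measurable[F] a) (hN' : Measurable[F'] N')
    (hw01 : ∀ ω, w ω = 0 ∨ w ω = 1) (ha01 : ∀ ω, a ω = 0 ∨ a ω = 1) (hp0 : 0 ≤ p) (hp1 : p ≤ 1)
    (hN : ∀ᵐ ω ∂μ, N ω + w ω = N' ω)
    (hbern : ∀ T, MeasurableSet[F'] T →
      μ ({ω | a ω = 1} ∩ {ω | w ω = 1} ∩ T) = ENNReal.ofReal p * μ ({ω | w ω = 1} ∩ T)) :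
    IsCondBinomial μ F' (fun ω => X ω + w ω * a ω) N' p := by
  intro S hS x
  have hw' : Measurable[mΩ] w := hw.mono hF le_rfl
  have ha' : Measurable[mΩ] a := ha.mono hF le_rfl
  have hSF : MeasurableSet[F] S := hF' _ hS
  have hW : ∀ b, MeasurableSet[F] {ω | w ω = b} := fun b => hw (measurableSet_singleton b)
  have hA : ∀ b, MeasurableSet[F] {ω | a ω = b} := fun b => ha (measurableSet_singleton b)
  have hN'S : ∀ s, MeasurableSet[F'] (S ∩ {ω | N' ω = s}) :=
    fun s => hS.inter (hN' (measurableSet_singleton s))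
  set G : ℕ → ℝ≥0∞ := fun s => μ ({ω | w ω = 1} ∩ (S ∩ {ω | N' ω = s}))
  have hskip : ∀ s, μ ({ω | w ω = 0} ∩ S ∩ {ω | N ω = s}) =
      μ ({ω | w ω = 0} ∩ (S ∩ {ω | N' ω = s})) := fun s => by
    rw [measure_inter_eq_of_ae_add hN (fun _ h => h.1), inter_assoc, add_zero]
  have hsuccess : ∀ s, μ ({ω | a ω = 1} ∩ {ω | w ω = 1} ∩ S ∩ {ω | N ω = s}) =
      ENNReal.ofReal p * G (s + 1) := fun s => by
    rw [measure_inter_eq_of_ae_add hN (fun _ h => h.1.2), inter_assoc _ S, hbern _ (hN'S _)]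
  have hfailure : ∀ s, μ ({ω | a ω = 0} ∩ {ω | w ω = 1} ∩ S ∩ {ω | N ω = s}) =
      ENNReal.ofReal (1 - p) * G (s + 1) := fun s => by
    rw [measure_inter_eq_of_ae_add hN (fun _ h => h.1.2), inter_assoc _ S, inter_assoc]
    refine measure_inter_zero_eq_of_bernoulli ha' ha01 hp0 hp1 ?_
    rw [← inter_assoc, hbern _ (hN'S _)]
  have hG0 : G 0 = 0 := by
    refine measure_mono_null (fun ω hω => ?_) (ae_iff.mp hN)
    simp only [mem_inter_iff, mem_ofPred_eq] at hω ⊢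
    omega
  have hrhs : ∀ s, μ (S ∩ {ω | N' ω = s}) = μ ({ω | w ω = 0} ∩ (S ∩ {ω | N' ω = s})) + G s :=
    fun s => measure_eq_inter_zero_add_inter_one hw' hw01 _
  rw [measure_inter_add_mul_eq hw' ha' hw01 ha01, hX _ ((hW 0).inter hSF) x,
    hX _ (((hA 0).inter (hW 1)).inter hSF) x]
  simp_rw [hskip, hfailure, hrhs, mul_add, ENNReal.tsum_add]
  rw [tsum_eq_zero_add' ENNReal.summable (f := fun s => binomialMass p s x * G s), hG0, mul_zero,
    zero_add]
  congr 1
  cases x with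
  | zero =>
    simp only [Nat.add_eq_zero_iff, one_ne_zero, and_false, ofPred_false, inter_empty,
      measure_empty, add_zero]
    exact (tsum_binomialMass_succ_zero_mul hp1 _).symm
  | succ y =>
    simp only [Nat.add_right_cancel_iff]
    rw [hX _ (((hA 1).inter (hW 1)).inter hSF) y, tsum_binomialMass_succ_succ_mul hp0 hp1]
    simp_rw [hsuccess]

theorem IsCondBinomial.measure_eq [IsProbabilityMeasure μ] {F : MeasurableSpace Ω} {X : Ω → ℕ}
    {m : ℕ} {p : ℝ} (hX : IsCondBinomial μ F X (fun _ => m) p) (x : ℕ) :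
    μ {ω | X ω = x} = binomialMass p m x := by
  have h := hX univ MeasurableSet.univ x
  rw [univ_inter, tsum_eq_single m (fun s hs => by simp [Ne.symm hs])] at h
  simpa using h

section Levels

variable {n : ℕ}

def sumBelow {M : Type*} [AddCommMonoid M] (f : Fin n → M) (j : ℕ) : M :=
  ∑ k : Fin n with k.val < j, f k

def sumFrom {M : Type*} [AddCommMonoid M] (f : Fin n → M) (j : ℕ) : M :=
  ∑ k : Fin n with j ≤ k.val, f k

variable {M : Type*} [AddCommMonoid M] (f : Fin n → M)

@[simp]
theorem sumBelow_zero : sumBelow f 0 = 0 := by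
  simp [sumBelow]

@[simp]
theorem sumBelow_self : sumBelow f n = ∑ k, f k := by
  simp [sumBelow]

theorem sumBelow_succ {j : ℕ} (hj : j < n) : sumBelow f (j + 1) = sumBelow f j + f ⟨j, hj⟩ := by
  have : ({k : Fin n | k.val < j + 1} : Finset (Fin n)) =
      insert ⟨j, hj⟩ ({k : Fin n | k.val < j} : Finset (Fin n)) := by
    ext k
    simp [Fin.ext_iff]
    omega
  rw [sumBelow, this, Finset.sum_insert (by simp), add_comm, sumBelow]

@[simp]
theorem sumFrom_zero : sumFrom f 0 = ∑ k, f k := by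
  simp [sumFrom]

@[simp]
theorem sumFrom_self : sumFrom f n = 0 := by
  rw [sumFrom, Finset.filter_false_of_mem (fun k _ => not_le.mpr k.isLt), Finset.sum_empty]

theorem sumFrom_eq_add {j : ℕ} (hj : j < n) : sumFrom f j = f ⟨j, hj⟩ + sumFrom f (j + 1) := by
  have : ({k : Fin n | j ≤ k.val} : Finset (Fin n)) =
      insert ⟨j, hj⟩ ({k : Fin n | j + 1 ≤ k.val} : Finset (Fin n)) := by
    ext k
    simp [Fin.ext_iff]
    omega
  rw [sumFrom, this, Finset.sum_insert (by simp), sumFrom]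

theorem sumFrom_le_sum (f : Fin n → ℕ) (j : ℕ) : sumFrom f j ≤ ∑ k, f k :=
  Finset.sum_le_sum_of_subset (Finset.filter_subset _ _)

end Levels

section FutureSigma

variable {n : ℕ} {β : Type*} [MeasurableSpace β]

abbrev futureSigma (X : Fin n → Ω → β) (j : ℕ) : MeasurableSpace Ω :=
  MeasurableSpace.comap (fun ω (k : {k : Fin n // j ≤ k.val}) => X k ω) inferInstance

variable (X : Fin n → Ω → β)

theorem measurable_futureSigma {j : ℕ} {k : Fin n} (hk : j ≤ k.val) :
    Measurable[futureSigma X j] (X k) :=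
  (measurable_pi_apply (⟨k, hk⟩ : {k : Fin n // j ≤ k.val})).comp
    (comap_measurable fun ω (k : {k : Fin n // j ≤ k.val}) => X k ω)

theorem futureSigma_le_of_measurable {m : MeasurableSpace Ω} {j : ℕ}
    (h : ∀ k : Fin n, j ≤ k.val → Measurable[m] (X k)) : futureSigma X j ≤ m :=
  (measurable_pi_lambda _ fun k : {k : Fin n // j ≤ k.val} => h k.1 k.2).comap_le

theorem futureSigma_anti : Antitone (futureSigma X) :=
  fun _ _ hij => futureSigma_le_of_measurable X fun _ hk => measurable_futureSigma X (hij.trans hk)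

theorem futureSigma_succ_le_comap (j : Fin n) :
    futureSigma X (j.val + 1) ≤
      MeasurableSpace.comap (fun ω (k : {k : Fin n // j < k}) => X k ω) inferInstance :=
  futureSigma_le_of_measurable X fun k hk =>
    (measurable_pi_apply (⟨k, Fin.lt_def.mpr hk⟩ : {k : Fin n // j < k})).comp
      (comap_measurable fun ω (k : {k : Fin n // j < k}) => X k ω)

theorem measurable_sumFrom {g : β → ℕ} (hg : Measurable g) (j : ℕ) :
    Measurable[futureSigma X j] fun ω => sumFrom (fun k => g (X k ω)) j :=
  Finset.measurable_sum _ fun _ hk => hg.comp (measurable_futureSigma X (Finset.mem_filter.mp hk).2)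

end FutureSigma

theorem isCondBinomial_sumBelow [IsFiniteMeasure μ] {n m : ℕ} {p : ℝ} (hp0 : 0 ≤ p) (hp1 : p ≤ 1)
    {A W : Fin n → Ω → ℕ} (hAm : ∀ j, Measurable (A j)) (hWm : ∀ j, Measurable (W j))
    (hA01 : ∀ j ω, A j ω = 0 ∨ A j ω = 1) (hW01 : ∀ j ω, W j ω = 0 ∨ W j ω = 1)
    (hWsum : ∀ᵐ ω ∂μ, ∑ j, W j ω = m)
    (hcond : ∀ j : Fin n, ∀ S : Set Ω,
      MeasurableSet[MeasurableSpace.comap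
        (fun ω (k : {k : Fin n // j < k}) => (A k.val ω, W k.val ω)) inferInstance] S →
      μ ({ω | A j ω = 1} ∩ {ω | W j ω = 1} ∩ S) = ENNReal.ofReal p * μ ({ω | W j ω = 1} ∩ S))
    {j : ℕ} (hj : j ≤ n) :
    IsCondBinomial μ (futureSigma (fun k ω => (A k ω, W k ω)) j)
      (fun ω => sumBelow (fun k => W k ω * A k ω) j) (fun ω => m - sumFrom (W · ω) j) p := by
  set X : Fin n → Ω → ℕ × ℕ := fun k ω => (A k ω, W k ω)
  induction j with
  | zero =>
    simp only [sumBelow_zero, sumFrom_zero]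
    exact isCondBinomial_zero (by filter_upwards [hWsum] with ω h; simp [h]) p
  | succ j ih =>
    have hjn : j < n := hj
    simp only [sumBelow_succ _ hjn]
    refine (ih hjn.le).add_mul (futureSigma_le_of_measurable X fun k _ => (hAm k).prodMk (hWm k))
      (futureSigma_anti X j.le_succ) (measurable_snd.comp (measurable_futureSigma X le_rfl))
      (measurable_fst.comp (measurable_futureSigma X le_rfl))
      (Measurable.of_discrete.comp (measurable_sumFrom X measurable_snd (j + 1)))
      (hW01 _) (hA01 _) hp0 hp1 ?_ fun T hT => hcond ⟨j, hjn⟩ T (futureSigma_succ_le_comap X _ T hT)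
    filter_upwards [hWsum] with ω h
    have := sumFrom_le_sum (W · ω) j
    rw [sumFrom_eq_add _ hjn] at this ⊢
    omega

end

theorem weighted_sum_binomial_general
    {Ω : Type*} [MeasurableSpace Ω] (μ : Measure Ω) [IsProbabilityMeasure μ]
    (n m : ℕ)
    (pstar : ℝ) (hp : pstar ∈ Set.Ioo (0:ℝ) 1)
    (A W : Fin n → Ω → ℕ) (hAm : ∀ j, Measurable (A j)) (hWm : ∀ j, Measurable (W j))
    (hA01 : ∀ j ω, A j ω = 0 ∨ A j ω = 1)
    (hW01 : ∀ j ω, W j ω = 0 ∨ W j ω = 1)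
    (hWsum : ∀ᵐ ω ∂μ, ∑ j, W j ω = m)
    (hcond : ∀ j : Fin n, ∀ S : Set Ω,
      MeasurableSet[MeasurableSpace.comap
        (fun ω (k : {k : Fin n // j < k}) => (A k.val ω, W k.val ω)) inferInstance] S →
      μ ({ω | A j ω = 1} ∩ {ω | W j ω = 1} ∩ S)
        = ENNReal.ofReal pstar * μ ({ω | W j ω = 1} ∩ S)) :
    ∀ x : ℕ, μ {ω | ∑ j, W j ω * A j ω = x}
      = ENNReal.ofReal ((m.choose x : ℝ) * pstar ^ x * (1 - pstar) ^ (m - x)) := by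
  have h := isCondBinomial_sumBelow hp.1.le hp.2.le hAm hWm hA01 hW01 hWsum hcond le_rfl
  simp only [sumBelow_self, sumFrom_self, Nat.sub_zero] at h
  exact h.measure_eq

/-- Let `(A_j, W_j)` be binary with `Σ_j W_j = m` a.s., and for each `j`,
conditionally on `σ({A_k, W_k}_{k>j})` and `{W_j = 1}`, let `A_j` be Bernoulli(p*).
Then `Σ_j W_j A_j` has the same distribution as a sum of `m` i.i.d. Bernoulli(p*)
variables, i.e. it is Binomial(m, p*):
`ℙ(Σ_j W_j A_j = x) = C(m, x)·p*^x·(1-p*)^{m-x}` for every `x`. -/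
theorem weighted_sum_binomial
    {Ω : Type*} [MeasurableSpace Ω] (μ : Measure Ω) [IsProbabilityMeasure μ]
    (n m : ℕ) (hm : m ≤ n)
    (pstar : ℝ) (hp : pstar ∈ Set.Ioo (0:ℝ) 1)
    (A W : Fin n → Ω → ℕ) (hAm : ∀ j, Measurable (A j)) (hWm : ∀ j, Measurable (W j))
    (hA01 : ∀ j ω, A j ω = 0 ∨ A j ω = 1)
    (hW01 : ∀ j ω, W j ω = 0 ∨ W j ω = 1)
    (hWsum : ∀ᵐ ω ∂μ, ∑ j, W j ω = m)
    (hcond : ∀ j : Fin n, ∀ S : Set Ω,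
      MeasurableSet[MeasurableSpace.comap
        (fun ω (k : {k : Fin n // j < k}) => (A k.val ω, W k.val ω)) inferInstance] S →
      μ ({ω | A j ω = 1} ∩ {ω | W j ω = 1} ∩ S)
        = ENNReal.ofReal pstar * μ ({ω | W j ω = 1} ∩ S)) :
    ∀ x : ℕ, μ {ω | ∑ j, W j ω * A j ω = x}
      = ENNReal.ofReal ((m.choose x : ℝ) * pstar ^ x * (1 - pstar) ^ (m - x)) :=
  weighted_sum_binomial_general μ n m pstar hp A W hAm hWm hA01 hW01 hWsum hcond
end

section
/- Let p* ∈ (0,1) and let (A_j, W_j)_{j=1}^n be {0,1}-valued random variables such that Σ_{j=1}^n W_j = m almost surely for a fixed m ≤ n, and for every j, conditionally on σ({A_k, W_k}_{k=j+1}^n) and the event {W_j = 1}, A_j is Bernoulli with a (random, history-dependent) parameter p({A_k, W_k}_{k=j+1}^n) that is almost surely at most p*. Define M_t^w = Σ_{j=1}^{n-t} W_j A_j and, for an integer v ≥ 1, τ^w = min{ t ∈ {0,...,n-1} : Σ_{j=1}^{n-t} W_j (1 - A_j) < v or t = n - 1 }. Then M_{τ^w}^w is stochastically dominated by NB(v,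 p*): ℙ(M_{τ^w}^w ≥ k) ≤ ℙ(N ≥ k) for all integers k ≥ 0, where N ~ NB(v, p*). -/
/-!
Reveal the indices from the top down. Each index with `W_j = 1` contributes the letter `A_j` to a
word read from the bottom index up; the full word `x` has length `m` almost surely. The segment
below `τ` is a prefix of `x` with fewer than `v` failures (or, at the forced stop, a single
failure), so on `{M_τ ≥ k}` at least `k` successes of `x` precede its `v`-th failure.

Let `V(w)` be the probability of that event when the `m - |w|` letters still hidden in front of
the revealed part `w` are independent Bernoulli(`p*`) trials. Then
`V(w) = p* V(1w) + (1 - p*) V(0w)` and `V(0w) ≤ V(1w)`, so revealing a letter that is a success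
with conditional probability at most `p*` cannot increase `𝔼 V`. Hence
`ℙ(M_τ ≥ k) ≤ 𝔼 V(x) ≤ V(∅)`, the probability of the event for `m` i.i.d. trials, which is at most
the `NB(v, p*)` tail because both satisfy `t(k, v) = p* t(k - 1, v) + (1 - p*) t(k, v - 1)`.
-/

open MeasureTheory Set
open scoped ENNReal

namespace NegBinomialDomination

def successesBefore : ℕ → List Bool → ℕ
  | 0, _ => 0
  | _ + 1, [] => 0
  | v + 1, true :: w => successesBefore (v + 1) w + 1
  | v + 1, false :: w => successesBefore v w

@[simp] lemma successesBefore_zero (w : List Bool) : successesBefore 0 w = 0 := by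
  cases w <;> rfl

@[simp] lemma successesBefore_nil (v : ℕ) : successesBefore v [] = 0 := by
  cases v <;> rfl

lemma successesBefore_true_cons {v : ℕ} (hv : 1 ≤ v) (w : List Bool) :
    successesBefore v (true :: w) = successesBefore v w + 1 := by
  obtain ⟨v, rfl⟩ := Nat.exists_eq_add_of_le' hv
  rfl

lemma successesBefore_false_cons (v : ℕ) (w : List Bool) :
    successesBefore v (false :: w) = successesBefore (v - 1) w := by
  cases v <;> simp [successesBefore]

lemma successesBefore_le_succ (v : ℕ) (w : List Bool) :
    successesBefore v w ≤ successesBefore (v + 1) w := by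
  induction w generalizing v with
  | nil => cases v <;> rfl
  | cons b w ih =>
    cases v with
    | zero => simp
    | succ v => cases b <;> simp [successesBefore, ih]

lemma successesBefore_false_le_true (v : ℕ) (c w : List Bool) :
    successesBefore v (c ++ false :: w) ≤ successesBefore v (c ++ true :: w) := by
  induction c generalizing v with
  | nil =>
    cases v with
    | zero => simp
    | succ v => simpa [successesBefore] using (successesBefore_le_succ v w).trans (Nat.le_succ _)
  | cons b c ih =>
    cases v with
    | zero => simp
    | succ v => cases b <;> simp [successesBefore, ih]

lemma count_true_le_successesBefore {t w : List Bool} (htw : t <+: w) {v : ℕ}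
    (ht : t.count false < v) : t.count true ≤ successesBefore v w := by
  induction t generalizing w v with
  | nil => simp
  | cons b t ih =>
    obtain ⟨w, rfl⟩ := htw
    obtain ⟨v, rfl⟩ : ∃ u, v = u + 1 := Nat.exists_eq_add_one.mpr (by omega)
    cases b
    · simp only [List.count_cons_self, List.count_cons_of_ne (by decide : false ≠ true)] at ht ⊢
      exact ih (List.prefix_append _ _) (by omega)
    · simp only [List.count_cons_self, List.count_cons_of_ne (by decide : true ≠ false)] at ht ⊢
      exact Nat.succ_le_succ (ih (List.prefix_append _ _) ht)

/-- `tailValue p k v w f` is the probability that at least `k` successes precede the `v`-th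
failure in `c ++ w`, where `c` consists of `f` further independent Bernoulli(`p`) trials. -/
noncomputable def tailValue (p : ℝ≥0∞) (k v : ℕ) : List Bool → ℕ → ℝ≥0∞
  | w, 0 => if k ≤ successesBefore v w then 1 else 0
  | w, f + 1 => p * tailValue p k v (true :: w) f + (1 - p) * tailValue p k v (false :: w) f

section TailValue

variable {p : ℝ≥0∞} {k v : ℕ}

lemma tailValue_mono {x y : List Bool}
    (hxy : ∀ c, k ≤ successesBefore v (c ++ x) → k ≤ successesBefore v (c ++ y)) (f : ℕ) :
    tailValue p k v x f ≤ tailValue p k v y f := by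
  induction f generalizing x y with
  | zero =>
    have := hxy []
    simp only [List.nil_append] at this
    simp only [tailValue]
    split_ifs <;> simp_all
  | succ f ih =>
    have hcons (b : Bool) : tailValue p k v (b :: x) f ≤ tailValue p k v (b :: y) f :=
      ih fun c => by simpa using hxy (c ++ [b])
    simp only [tailValue]
    gcongr <;> apply hcons

lemma tailValue_false_le_true (w : List Bool) (f : ℕ) :
    tailValue p k v (false :: w) f ≤ tailValue p k v (true :: w) f :=
  tailValue_mono (fun c => (le_trans · (successesBefore_false_le_true v c w))) f

lemma tailValue_le_one (hp : p ≤ 1) (w : List Bool) (f : ℕ) : tailValue p k v w f ≤ 1 := by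
  induction f generalizing w with
  | zero => unfold tailValue; split_ifs <;> simp
  | succ f ih =>
    calc tailValue p k v w (f + 1) ≤ p * 1 + (1 - p) * 1 := by
          unfold tailValue; gcongr <;> exact ih _
      _ = 1 := by rw [mul_one, mul_one, add_tsub_cancel_of_le hp]

lemma tailValue_zero_right (hk : 1 ≤ k) (w : List Bool) (f : ℕ) : tailValue p k 0 w f = 0 := by
  induction f generalizing w with
  | zero => simp [tailValue]; omega
  | succ f ih => simp [tailValue, ih]

lemma tailValue_succ (hk : 1 ≤ k) (hv : 1 ≤ v) (w : List Bool) (f : ℕ) :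
    tailValue p k v w (f + 1)
      = p * tailValue p (k - 1) v w f + (1 - p) * tailValue p k (v - 1) w f := by
  induction f generalizing w with
  | zero =>
    simp only [tailValue, successesBefore_true_cons hv, successesBefore_false_cons]
    congr 2
    exact if_congr (by omega) rfl rfl
  | succ f ih =>
    rw [tailValue, ih, ih]
    simp only [tailValue]
    ring

end TailValue

noncomputable def nbPmf (p : ℝ) (v N : ℕ) : ℝ := ((v + N - 1).choose N : ℝ) * p ^ N * (1 - p) ^ v

noncomputable def nbTail (p : ℝ) (k v : ℕ) : ℝ := ∑' i, nbPmf p v (k + i)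

section NBTail

variable {p : ℝ} (hp0 : 0 ≤ p) (hp1 : p < 1)
include hp0 hp1

lemma nbPmf_nonneg (v N : ℕ) : 0 ≤ nbPmf p v N := by
  unfold nbPmf
  have : 0 ≤ 1 - p := by linarith
  positivity

lemma summable_nbPmf (v : ℕ) : Summable (nbPmf p v) := by
  have hp : ‖p‖ < 1 := by rwa [Real.norm_of_nonneg hp0]
  refine (summable_choose_mul_geometric_of_norm_lt_one (R := ℝ) v hp).of_nonneg_of_le
    (nbPmf_nonneg hp0 hp1 v) fun N => ?_
  unfold nbPmf
  have hchoose : (v + N - 1).choose N ≤ (N + v).choose v := by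
    rw [add_comm N v, Nat.choose_symm_add]
    exact Nat.choose_le_choose N (by omega)
  have h1p : (1 - p) ^ v ≤ 1 := pow_le_one₀ (by linarith) (by linarith)
  calc ((v + N - 1).choose N : ℝ) * p ^ N * (1 - p) ^ v ≤ ((N + v).choose v : ℝ) * p ^ N * 1 := by
        gcongr
    _ = _ := mul_one _

lemma nbTail_nonneg (k v : ℕ) : 0 ≤ nbTail p k v :=
  tsum_nonneg fun i => nbPmf_nonneg hp0 hp1 v (k + i)

lemma nbTail_zero_left (v : ℕ) : nbTail p 0 v = 1 := by
  simp only [nbTail, zero_add]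
  rcases Nat.eq_zero_or_pos v with rfl | hv
  · rw [tsum_eq_single 0 fun i hi => ?_]
    · simp [nbPmf]
    · simp [nbPmf, Nat.choose_eq_zero_of_lt (by omega : i - 1 < i)]
  · have hp : ‖p‖ < 1 := by rwa [Real.norm_of_nonneg hp0]
    have h1p : (1 - p) ^ v ≠ 0 := pow_ne_zero _ (by linarith)
    have := ((hasSum_choose_mul_geometric_of_norm_lt_one (v - 1) hp).mul_right ((1 - p) ^ v))
    rw [Nat.sub_add_cancel hv, one_div, inv_mul_cancel₀ h1p] at this
    refine HasSum.tsum_eq (this.congr_fun fun N => ?_)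
    rw [Nat.add_comm N, Nat.choose_symm_add, show v - 1 + N = v + N - 1 by omega, nbPmf]

omit hp0 hp1 in
lemma nbPmf_succ {v : ℕ} (hv : 1 ≤ v) (N : ℕ) :
    nbPmf p v (N + 1) = p * nbPmf p v N + (1 - p) * nbPmf p (v - 1) (N + 1) := by
  obtain ⟨u, rfl⟩ := Nat.exists_eq_add_of_le' hv
  simp only [nbPmf, Nat.add_sub_cancel, show u + 1 + (N + 1) - 1 = (u + N) + 1 by omega,
    show u + 1 + N - 1 = u + N by omega, show u + (N + 1) - 1 = u + N by omega,
    Nat.choose_succ_succ', Nat.cast_add]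
  ring

lemma nbTail_succ {k v : ℕ} (hk : 1 ≤ k) (hv : 1 ≤ v) :
    nbTail p k v = p * nbTail p (k - 1) v + (1 - p) * nbTail p k (v - 1) := by
  have hs (u j : ℕ) : Summable fun i => nbPmf p u (j + i) := by
    simpa only [add_comm j] using (summable_nat_add_iff j).mpr (summable_nbPmf hp0 hp1 u)
  unfold nbTail
  rw [← tsum_mul_left, ← tsum_mul_left, ← ((hs v _).mul_left p).tsum_add ((hs _ _).mul_left _)]
  refine tsum_congr fun i => ?_
  rw [show k + i = (k - 1 + i) + 1 by omega, nbPmf_succ hv]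

lemma tailValue_le_nbTail (k v f : ℕ) :
    tailValue (ENNReal.ofReal p) k v [] f ≤ ENNReal.ofReal (nbTail p k v) := by
  induction f generalizing k v with
  | zero =>
    simp only [tailValue, successesBefore_nil]
    split_ifs with h
    · rw [Nat.le_zero.mp h, nbTail_zero_left hp0 hp1, ENNReal.ofReal_one]
    · exact bot_le
  | succ f ih =>
    rcases Nat.eq_zero_or_pos k with rfl | hk
    · rw [nbTail_zero_left hp0 hp1, ENNReal.ofReal_one]
      exact tailValue_le_one (ENNReal.ofReal_le_one.mpr hp1.le) _ _
    rcases Nat.eq_zero_or_pos v with rfl | hv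
    · rw [tailValue_zero_right hk]
      exact bot_le
    rw [tailValue_succ hk hv, nbTail_succ hp0 hp1 hk hv,
      ENNReal.ofReal_add (mul_nonneg hp0 (nbTail_nonneg hp0 hp1 _ _))
        (mul_nonneg (by linarith) (nbTail_nonneg hp0 hp1 _ _)),
      ENNReal.ofReal_mul hp0, ENNReal.ofReal_mul (by linarith), ENNReal.ofReal_sub 1 hp0,
      ENNReal.ofReal_one]
    gcongr <;> apply ih

end NBTail

section Measure

variable {Ω : Type*}

lemma measurable_comap_of_forall_eq {β γ : Type*} [MeasurableSpace β] [DiscreteMeasurableSpace β]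
    [MeasurableSpace γ] {f : Ω → β} {g : Ω → γ} (h : ∀ ω ω', f ω = f ω' → g ω = g ω') :
    Measurable[MeasurableSpace.comap f inferInstance] g := by
  intro s _
  refine ⟨f '' (g ⁻¹' s), .of_discrete, Set.ext fun ω => ⟨?_, fun hω => ⟨ω, hω, rfl⟩⟩⟩
  rintro ⟨ω', hω', hf⟩
  rw [mem_preimage, ← h ω' ω hf]
  exact hω'

variable {m m0 : MeasurableSpace Ω} {μ : Measure Ω} {T U : Set Ω} {c : ℝ≥0∞}

lemma setLIntegral_le_mul_of_measure_inter_le (hm : m ≤ m0)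
    (h : ∀ S, MeasurableSet[m] S → μ (T ∩ S) ≤ c * μ (U ∩ S)) {g : Ω → ℝ≥0∞}
    (hg : Measurable[m] g) : ∫⁻ ω in T, g ω ∂μ ≤ c * ∫⁻ ω in U, g ω ∂μ := by
  rw [← lintegral_trim hm hg, ← lintegral_trim hm hg, ← smul_eq_mul, ← lintegral_smul_measure]
  refine lintegral_mono' (Measure.le_iff.mpr fun S hS => ?_) le_rfl
  rw [Measure.smul_apply, trim_measurableSet_eq hm hS, trim_measurableSet_eq hm hS,
    Measure.restrict_apply (hm S hS), Measure.restrict_apply (hm S hS), inter_comm, smul_eq_mul,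
    inter_comm S]
  exact h S hS

lemma setLIntegral_inter_add_setLIntegral_diff_le {B : Set Ω} (hm : m ≤ m0) (hB : MeasurableSet B)
    (hc : c ≤ 1) (h : ∀ S, MeasurableSet[m] S → μ (B ∩ U ∩ S) ≤ c * μ (U ∩ S))
    {a b : Ω → ℝ≥0∞} (hba : b ≤ a) (ha : Measurable[m] a) (hb : Measurable[m] b) :
    ∫⁻ ω in B ∩ U, a ω ∂μ + ∫⁻ ω in U \ B, b ω ∂μ ≤ ∫⁻ ω in U, c * a ω + (1 - c) * b ω ∂μ := by
  have hδ : Measurable[m] (fun ω => a ω - b ω) := ha.sub hb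
  have hb0 : Measurable b := hb.mono hm le_rfl
  have hsplit (ω : Ω) : a ω = b ω + (a ω - b ω) := (add_tsub_cancel_of_le (hba ω)).symm
  have hmix (ω : Ω) : c * a ω + (1 - c) * b ω = b ω + c * (a ω - b ω) := by
    conv_lhs => rw [hsplit ω]
    calc c * (b ω + (a ω - b ω)) + (1 - c) * b ω
        = (c + (1 - c)) * b ω + c * (a ω - b ω) := by ring
      _ = _ := by rw [add_tsub_cancel_of_le hc, one_mul]
  calc ∫⁻ ω in B ∩ U, a ω ∂μ + ∫⁻ ω in U \ B, b ω ∂μ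
      = ∫⁻ ω in U, b ω ∂μ + ∫⁻ ω in B ∩ U, a ω - b ω ∂μ := by
        rw [← lintegral_inter_add_sdiff b U hB, inter_comm U B, add_right_comm,
          ← lintegral_add_left hb0]
        exact congrArg (· + _) (lintegral_congr hsplit)
    _ ≤ ∫⁻ ω in U, b ω ∂μ + c * ∫⁻ ω in U, a ω - b ω ∂μ := by
        gcongr
        exact setLIntegral_le_mul_of_measure_inter_le hm h hδ
    _ = ∫⁻ ω in U, c * a ω + (1 - c) * b ω ∂μ := by
        simp_rw [hmix, lintegral_add_left hb0, lintegral_const_mul c (hδ.mono hm le_rfl)]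

end Measure

section Words

open Finset

variable {Ω : Type*} {n : ℕ} (A W : Fin n → Ω → ℕ)

def outcome (i : ℕ) (ω : Ω) : List Bool :=
  if h : i < n then (if W ⟨i, h⟩ ω = 1 then [decide (A ⟨i, h⟩ ω = 1)] else []) else []

def lowerWord (b : ℕ) (ω : Ω) : List Bool := (List.range b).flatMap (outcome A W · ω)

def upperWord (s : ℕ) (ω : Ω) : List Bool := (List.range' s (n - s)).flatMap (outcome A W · ω)

def future (j : Fin n) (ω : Ω) : {k : Fin n // j < k} → ℕ × ℕ := fun k => (A k.val ω, W k.val ω)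

variable {A W}

lemma lowerWord_append_upperWord {b : ℕ} (hb : b ≤ n) (ω : Ω) :
    lowerWord A W b ω ++ upperWord A W b ω = upperWord A W 0 ω := by
  rw [lowerWord, upperWord, upperWord, ← List.flatMap_append, List.range_eq_range', Nat.sub_zero]
  congr 1
  simpa [Nat.add_sub_cancel' hb] using List.range'_append_1 (s := 0) (m := b) (n := n - b)

lemma upperWord_eq_outcome_append (j : Fin n) (ω : Ω) :
    upperWord A W j ω = outcome A W j ω ++ upperWord A W (j + 1) ω := by
  rw [upperWord, show n - j = n - (j + 1) + 1 by omega, List.range'_succ]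
  rfl

lemma upperWord_of_W_eq_one {j : Fin n} {ω : Ω} (hW : W j ω = 1) :
    upperWord A W j ω = decide (A j ω = 1) :: upperWord A W (j + 1) ω := by
  simp [upperWord_eq_outcome_append, outcome, hW]

lemma upperWord_of_W_ne_one {j : Fin n} {ω : Ω} (hW : W j ω ≠ 1) :
    upperWord A W j ω = upperWord A W (j + 1) ω := by
  simp [upperWord_eq_outcome_append, outcome, hW]

@[simp] lemma upperWord_self (ω : Ω) : upperWord A W n ω = [] := by
  simp [upperWord]

lemma upperWord_congr {s : ℕ} {ω ω' : Ω}
    (h : ∀ i : Fin n, s ≤ i → A i ω = A i ω' ∧ W i ω = W i ω') :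
    upperWord A W s ω = upperWord A W s ω' := by
  refine List.flatMap_congr fun i hi => ?_
  rw [List.mem_range'_1] at hi
  have hin : i < n := by omega
  obtain ⟨hA, hW⟩ := h ⟨i, hin⟩ hi.1
  simp only [outcome, dif_pos hin, hA, hW]

lemma measurable_comap_future_comp_upperWord {β : Type*} [MeasurableSpace β] (F : List Bool → β)
    (j : Fin n) :
    Measurable[MeasurableSpace.comap (future A W j) inferInstance]
      fun ω => F (upperWord A W (j + 1) ω) :=
  measurable_comap_of_forall_eq fun _ _ h => congrArg F <| upperWord_congr fun i hi =>
    Prod.ext_iff.mp (congrFun h ⟨i, Nat.lt_of_succ_le hi⟩)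

lemma outcome_length_le (i : ℕ) (ω : Ω) : (outcome A W i ω).length ≤ 1 := by
  unfold outcome; split_ifs <;> simp

lemma length_lowerWord_le (b : ℕ) (ω : Ω) : (lowerWord A W b ω).length ≤ b := by
  induction b with
  | zero => simp [lowerWord]
  | succ b ih =>
    simp only [lowerWord, List.range_succ, List.flatMap_append, List.length_append,
      List.flatMap_singleton] at ih ⊢
    linarith [outcome_length_le (A := A) (W := W) b ω]

lemma sum_filter_val_lt_succ {M : Type*} [AddCommMonoid M] (g : Fin n → M) {b : ℕ} (hb : b < n) :
    ∑ j ∈ univ.filter (fun j : Fin n => j.val < b + 1), g j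
      = ∑ j ∈ univ.filter (fun j : Fin n => j.val < b), g j + g ⟨b, hb⟩ := by
  have hinsert : univ.filter (fun j : Fin n => j.val < b + 1)
      = insert ⟨b, hb⟩ (univ.filter (fun j : Fin n => j.val < b)) := by
    ext j
    simp [Fin.ext_iff]
    omega
  rw [hinsert, sum_insert (by simp), add_comm]

section Counting

variable (hA01 : ∀ j ω, A j ω = 0 ∨ A j ω = 1) (hW01 : ∀ j ω, W j ω = 0 ∨ W j ω = 1)
include hA01 hW01

lemma count_outcome {i : ℕ} (hi : i < n) (ω : Ω) :
    (outcome A W i ω).count true = W ⟨i, hi⟩ ω * A ⟨i, hi⟩ ω ∧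
      (outcome A W i ω).count false = W ⟨i, hi⟩ ω * (1 - A ⟨i, hi⟩ ω) := by
  rcases hA01 ⟨i, hi⟩ ω with hA | hA <;> rcases hW01 ⟨i, hi⟩ ω with hW | hW <;>
    simp [outcome, hi, hA, hW]

lemma count_lowerWord {b : ℕ} (hb : b ≤ n) (ω : Ω) :
    (lowerWord A W b ω).count true = ∑ j ∈ univ.filter (fun j : Fin n => j.val < b), W j ω * A j ω ∧
      (lowerWord A W b ω).count false
        = ∑ j ∈ univ.filter (fun j : Fin n => j.val < b), W j ω * (1 - A j ω) := by
  induction b with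
  | zero => simp [lowerWord]
  | succ b ih =>
    have hbn : b < n := by omega
    obtain ⟨ih1, ih2⟩ := ih hbn.le
    obtain ⟨h1, h2⟩ := count_outcome hA01 hW01 hbn ω
    simp only [lowerWord, List.range_succ, List.flatMap_append, List.flatMap_singleton,
      List.count_append] at ih1 ih2 ⊢
    rw [ih1, ih2, h1, h2, sum_filter_val_lt_succ _ hbn, sum_filter_val_lt_succ _ hbn]
    exact ⟨rfl, rfl⟩

lemma length_upperWord_zero (ω : Ω) :
    (upperWord A W 0 ω).length = ∑ j, W j ω := by
  obtain ⟨h1, h2⟩ := count_lowerWord hA01 hW01 le_rfl ω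
  rw [← lowerWord_append_upperWord le_rfl, upperWord_self, List.append_nil,
    ← List.count_true_add_count_false, h1, h2, ← sum_add_distrib]
  refine sum_congr (by ext j; simp) fun j _ => ?_
  rcases hA01 j ω with h | h <;> simp [h]

lemma le_successesBefore_upperWord {v : ℕ} (hv : 1 ≤ v) {t k : ℕ} {ω : Ω}
    (ht : ∑ j ∈ univ.filter (fun j : Fin n => j.val < n - t), W j ω * (1 - A j ω) < v ∨
      t = n - 1)
    (hk : k ≤ ∑ j ∈ univ.filter (fun j : Fin n => j.val < n - t), W j ω * A j ω) :
    k ≤ successesBefore v (upperWord A W 0 ω) := by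
  obtain ⟨htrue, hfalse⟩ := count_lowerWord hA01 hW01 (Nat.sub_le n t) ω
  rw [← htrue] at hk
  rw [← hfalse] at ht
  by_cases hlt : (lowerWord A W (n - t) ω).count false < v
  · have hpre := lowerWord_append_upperWord (A := A) (W := W) (Nat.sub_le n t) ω ▸
      List.prefix_append _ _
    exact hk.trans (count_true_le_successesBefore hpre hlt)
  · -- then `t = n - 1`: the segment holds at most one letter and it is a failure, so `k = 0`
    have hlen := length_lowerWord_le (A := A) (W := W) (n - t) ω
    rw [← List.count_true_add_count_false] at hlen
    have : k = 0 := by omega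
    simp [this]

end Counting

end Words

section Potential

variable {p : ℝ≥0∞} {k v m : ℕ}

/-- Words longer than `m` almost surely do not occur; giving them potential `0` makes
`potential_cons_le` hold unconditionally. -/
noncomputable def potential (p : ℝ≥0∞) (k v m : ℕ) (w : List Bool) : ℝ≥0∞ :=
  if w.length ≤ m then tailValue p k v w (m - w.length) else 0

lemma potential_cons_le (w : List Bool) :
    p * potential p k v m (true :: w) + (1 - p) * potential p k v m (false :: w)
      ≤ potential p k v m w := by
  unfold potential
  simp only [List.length_cons]
  by_cases h : w.length + 1 ≤ m
  · rw [if_pos h, if_pos h, if_pos (by omega), show m - w.length = m - (w.length + 1) + 1 by omega]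
    rfl
  · rw [if_neg h, if_neg h, mul_zero, mul_zero, add_zero]
    exact bot_le

lemma potential_false_le_true (w : List Bool) :
    potential p k v m (false :: w) ≤ potential p k v m (true :: w) := by
  unfold potential
  simp only [List.length_cons]
  split_ifs
  exacts [tailValue_false_le_true _ _, le_rfl]

lemma potential_of_length_eq {w : List Bool} (hw : w.length = m)
    (hk : k ≤ successesBefore v w) : potential p k v m w = 1 := by
  simp [potential, hw, tailValue, hk]

end Potential

section Supermartingale

variable {Ω : Type*} [MeasurableSpace Ω] {μ : Measure Ω} {n : ℕ} {A W : Fin n → Ω → ℕ}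
  (hAm : ∀ j, Measurable (A j)) (hWm : ∀ j, Measurable (W j))
  {p : ℝ≥0∞} {k v m : ℕ}
include hAm hWm

lemma measurable_future (j : Fin n) : Measurable (future A W j) :=
  measurable_pi_lambda _ fun i => (hAm i).prodMk (hWm i)

lemma measurable_comp_upperWord {β : Type*} [MeasurableSpace β] (F : List Bool → β) (s : ℕ) :
    Measurable fun ω => F (upperWord A W s ω) := by
  have hH : Measurable fun ω (j : Fin n) => (A j ω, W j ω) :=
    measurable_pi_lambda _ fun j => (hAm j).prodMk (hWm j)
  refine (measurable_comap_of_forall_eq fun ω ω' h => ?_).mono hH.comap_le le_rfl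
  exact congrArg F (upperWord_congr fun i _ => Prod.ext_iff.mp (congrFun h i))

lemma lintegral_potential_upperWord_le (hp : p ≤ 1) (j : Fin n)
    (hcond : ∀ S, MeasurableSet[MeasurableSpace.comap (future A W j) inferInstance] S →
      μ ({ω | A j ω = 1} ∩ {ω | W j ω = 1} ∩ S) ≤ p * μ ({ω | W j ω = 1} ∩ S)) :
    ∫⁻ ω, potential p k v m (upperWord A W j ω) ∂μ
      ≤ ∫⁻ ω, potential p k v m (upperWord A W (j + 1) ω) ∂μ := by
  set P := potential p k v m
  set X := upperWord A W (j + 1)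
  set B := {ω | A j ω = 1}
  set U := {ω | W j ω = 1}
  have hB : MeasurableSet B := hAm j (measurableSet_singleton 1)
  have hU : MeasurableSet U := hWm j (measurableSet_singleton 1)
  have hX (F : List Bool → ℝ≥0∞) :
      Measurable[MeasurableSpace.comap (future A W j) inferInstance] fun ω => F (X ω) :=
    measurable_comap_future_comp_upperWord F j
  have hsuccess : EqOn (fun ω => P (upperWord A W j ω)) (fun ω => P (true :: X ω)) (B ∩ U) :=
    fun ω ⟨(hA : A j ω = 1), hW⟩ => by simp only [upperWord_of_W_eq_one hW, hA, X, decide_true]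
  have hfailure : EqOn (fun ω => P (upperWord A W j ω)) (fun ω => P (false :: X ω)) (U \ B) :=
    fun ω ⟨hW, (hA : A j ω ≠ 1)⟩ => by simp only [upperWord_of_W_eq_one hW, hA, X, decide_false]
  have hnone : EqOn (fun ω => P (upperWord A W j ω)) (fun ω => P (X ω)) Uᶜ :=
    fun ω hW => by simp only [upperWord_of_W_ne_one hW, X]
  calc ∫⁻ ω, P (upperWord A W j ω) ∂μ
      = (∫⁻ ω in B ∩ U, P (true :: X ω) ∂μ + ∫⁻ ω in U \ B, P (false :: X ω) ∂μ)
        + ∫⁻ ω in Uᶜ, P (X ω) ∂μ := by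
        rw [← setLIntegral_congr_fun (hB.inter hU) hsuccess,
          ← setLIntegral_congr_fun (hU.diff hB) hfailure, ← setLIntegral_congr_fun hU.compl hnone,
          inter_comm, lintegral_inter_add_sdiff _ _ hB, lintegral_add_compl _ hU]
    _ ≤ ∫⁻ ω in U, p * P (true :: X ω) + (1 - p) * P (false :: X ω) ∂μ
        + ∫⁻ ω in Uᶜ, P (X ω) ∂μ := by
        gcongr
        exact setLIntegral_inter_add_setLIntegral_diff_le (measurable_future hAm hWm j).comap_le
          hB hp hcond (fun ω => potential_false_le_true _)
          (hX fun w => P (true :: w)) (hX fun w => P (false :: w))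
    _ ≤ ∫⁻ ω in U, P (X ω) ∂μ + ∫⁻ ω in Uᶜ, P (X ω) ∂μ := by
        gcongr with ω
        exact potential_cons_le _
    _ = ∫⁻ ω, P (X ω) ∂μ := lintegral_add_compl _ hU

lemma lintegral_potential_upperWord_le_potential_nil [IsProbabilityMeasure μ] (hp : p ≤ 1)
    (hcond : ∀ j : Fin n, ∀ S, MeasurableSet[MeasurableSpace.comap (future A W j) inferInstance] S →
      μ ({ω | A j ω = 1} ∩ {ω | W j ω = 1} ∩ S) ≤ p * μ ({ω | W j ω = 1} ∩ S)) :
    ∫⁻ ω, potential p k v m (upperWord A W 0 ω) ∂μ ≤ potential p k v m [] := by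
  have hchain : ∀ s ≤ n, ∫⁻ ω, potential p k v m (upperWord A W s ω) ∂μ
      ≤ ∫⁻ ω, potential p k v m (upperWord A W n ω) ∂μ := fun s hs =>
    Nat.decreasingInduction (fun t ht ih =>
      (lintegral_potential_upperWord_le hAm hWm hp ⟨t, ht⟩ (hcond _)).trans ih) le_rfl hs
  simpa using hchain 0 (Nat.zero_le n)

end Supermartingale

end NegBinomialDomination

open NegBinomialDomination in
theorem weighted_stopped_sum_negBinomial_dominated_conservative_general
    {Ω : Type*} [MeasurableSpace Ω] (μ : Measure Ω) [IsProbabilityMeasure μ]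
    (n v m : ℕ) (hv : 1 ≤ v)
    (pstar : ℝ) (hp : pstar ∈ Set.Ioo (0:ℝ) 1)
    (A W : Fin n → Ω → ℕ) (hAm : ∀ j, Measurable (A j)) (hWm : ∀ j, Measurable (W j))
    (hA01 : ∀ j ω, A j ω = 0 ∨ A j ω = 1)
    (hW01 : ∀ j ω, W j ω = 0 ∨ W j ω = 1)
    (hWsum : ∀ᵐ ω ∂μ, ∑ j, W j ω = m)
    (hcond : ∀ j : Fin n, ∀ S : Set Ω,
      MeasurableSet[MeasurableSpace.comap
        (fun ω (k : {k : Fin n // j < k}) => (A k.val ω, W k.val ω)) inferInstance] S →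
      μ ({ω | A j ω = 1} ∩ {ω | W j ω = 1} ∩ S)
        ≤ ENNReal.ofReal pstar * μ ({ω | W j ω = 1} ∩ S))
    (M : ℕ → Ω → ℕ)
    (hM : ∀ t ω, M t ω =
      ∑ j ∈ Finset.univ.filter (fun j : Fin n => j.val < n - t), W j ω * A j ω)
    (τ : Ω → ℕ)
    (hτ : ∀ ω, τ ω = sInf {t : ℕ | t ≤ n - 1 ∧
      ((∑ j ∈ Finset.univ.filter (fun j : Fin n => j.val < n - t),
          W j ω * (1 - A j ω)) < v ∨ t = n - 1)}) :
    ∀ k : ℕ, μ {ω | k ≤ M (τ ω) ω}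
      ≤ ENNReal.ofReal (∑' i : ℕ,
          ((v + (k + i) - 1).choose (k + i) : ℝ) * pstar ^ (k + i) * (1 - pstar) ^ v) := by
  intro k
  obtain ⟨hp0, hp1⟩ := hp
  set P := potential (ENNReal.ofReal pstar) k v m
  have hstopped (ω : Ω) (hk : k ≤ M (τ ω) ω) : k ≤ successesBefore v (upperWord A W 0 ω) := by
    obtain ⟨-, hτstop⟩ : τ ω ∈ _ := by
      rw [hτ ω]
      exact Nat.sInf_mem ⟨n - 1, le_rfl, Or.inr rfl⟩
    exact le_successesBefore_upperWord hA01 hW01 hv hτstop (hM (τ ω) ω ▸ hk)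
  have hlen : ∀ᵐ ω ∂μ, (upperWord A W 0 ω).length = m :=
    hWsum.mono fun ω h => (length_upperWord_zero hA01 hW01 ω).trans h
  calc μ {ω | k ≤ M (τ ω) ω} ≤ μ {ω | 1 ≤ P (upperWord A W 0 ω)} :=
        measure_mono_ae <| hlen.mono fun ω h hk => (potential_of_length_eq h (hstopped ω hk)).ge
    _ ≤ ∫⁻ ω, P (upperWord A W 0 ω) ∂μ := by
        simpa using mul_meas_ge_le_lintegral₀
          (measurable_comp_upperWord hAm hWm P 0).aemeasurable 1
    _ ≤ P [] := lintegral_potential_upperWord_le_potential_nil hAm hWm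
          (ENNReal.ofReal_le_one.mpr hp1.le) hcond
    _ ≤ ENNReal.ofReal (nbTail pstar k v) := by
        simpa [P, potential] using tailValue_le_nbTail hp0.le hp1 k v m

/-- As in the weighted setting, but where each `A_j`, conditionally on
`σ({A_k, W_k}_{k>j})` and `{W_j = 1}`, is Bernoulli with a (random, history-dependent)
parameter that is a.s. at most `p*`; formalized as: for every future-measurable `S`,
`ℙ({A_j = 1} ∩ {W_j = 1} ∩ S) ≤ p* · ℙ({W_j = 1} ∩ S)`. Then the stopped sum
`M^w_{τ^w}` is still stochastically dominated by `NB(v, p*)`. -/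
theorem weighted_stopped_sum_negBinomial_dominated_conservative
    {Ω : Type*} [MeasurableSpace Ω] (μ : Measure Ω) [IsProbabilityMeasure μ]
    (n v m : ℕ) (hn : 1 ≤ n) (hv : 1 ≤ v) (hm : m ≤ n)
    (pstar : ℝ) (hp : pstar ∈ Set.Ioo (0:ℝ) 1)
    (A W : Fin n → Ω → ℕ) (hAm : ∀ j, Measurable (A j)) (hWm : ∀ j, Measurable (W j))
    (hA01 : ∀ j ω, A j ω = 0 ∨ A j ω = 1)
    (hW01 : ∀ j ω, W j ω = 0 ∨ W j ω = 1)
    (hWsum : ∀ᵐ ω ∂μ, ∑ j, W j ω = m)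
    (hcond : ∀ j : Fin n, ∀ S : Set Ω,
      MeasurableSet[MeasurableSpace.comap
        (fun ω (k : {k : Fin n // j < k}) => (A k.val ω, W k.val ω)) inferInstance] S →
      μ ({ω | A j ω = 1} ∩ {ω | W j ω = 1} ∩ S)
        ≤ ENNReal.ofReal pstar * μ ({ω | W j ω = 1} ∩ S))
    (M : ℕ → Ω → ℕ)
    (hM : ∀ t ω, M t ω =
      ∑ j ∈ Finset.univ.filter (fun j : Fin n => j.val < n - t), W j ω * A j ω)
    (τ : Ω → ℕ)
    (hτ : ∀ ω, τ ω = sInf {t : ℕ | t ≤ n - 1 ∧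
      ((∑ j ∈ Finset.univ.filter (fun j : Fin n => j.val < n - t),
          W j ω * (1 - A j ω)) < v ∨ t = n - 1)}) :
    ∀ k : ℕ, μ {ω | k ≤ M (τ ω) ω}
      ≤ ENNReal.ofReal (∑' i : ℕ,
          ((v + (k + i) - 1).choose (k + i) : ℝ) * pstar ^ (k + i) * (1 - pstar) ^ v) :=
  weighted_stopped_sum_negBinomial_dominated_conservative_general μ n v m hv pstar hp A W hAm hWm
    hA01 hW01 hWsum hcond M hM τ hτ
end
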